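/- arXiv:2006.12450 — 6 statements merged into one kernel-verified Lean document; each statement's English description precedes it below -/
import Mathlib

section
/- Let U be a Polish space, G ⊆ C_b(U) an algebra of bounded continuous real-valued functions that strongly separates points, and ‖·‖_G a seminorm on G. Define d_G(μ,ν) := sup{ |∫ f dμ − ∫ f dν| / (‖f‖_∞ + ‖f‖_G) : f ∈ G, f ≠ 0 } for Borel probability measures μ, ν on U. Then d_G is a metric on the set of Borel probability measures on U: it is finite, symmetric, satisfies the triangle inequality, and d_G(μ,ν) = 0 if and only if μ = ν. -/
open MeasureTheory Filter
open scoped Topology ENNReal BoundedContinuousFunction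

/-- A set `G` of bounded continuous real-valued functions strongly separates points if for every
point `u` and every neighborhood `V` of `u` there is a finite `F ⊆ G` with
`inf_{u' ∉ V} max_{f ∈ F} |f u' - f u| > 0`. -/
def StronglySeparatesPoints {U : Type*} [TopologicalSpace U]
    (G : Set (BoundedContinuousFunction U ℝ)) : Prop :=
  ∀ (u : U) (V : Set U), V ∈ nhds u →
    ∃ F : Finset (BoundedContinuousFunction U ℝ), ↑F ⊆ G ∧
      ∃ ε : ℝ, 0 < ε ∧ ∀ u' ∉ V, ∃ f ∈ F, ε ≤ |f u' - f u|

/-- The metric `d_G` associated with a family `G ⊆ C_b(U)` and a seminorm `N` on it. -/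
noncomputable def dG {U : Type*} [TopologicalSpace U] [MeasurableSpace U]
    (G : Set (BoundedContinuousFunction U ℝ)) (N : BoundedContinuousFunction U ℝ → ℝ)
    (μ ν : Measure U) : ℝ :=
  sSup {r : ℝ | ∃ f ∈ G, f ≠ 0 ∧ r = |(∫ x, f x ∂μ) - ∫ x, f x ∂ν| / (‖f‖ + N f)}

/-! Only `d_G(μ, ν) = 0 → μ = ν` has content. It gives `∫ f dμ = ∫ f dν` for `f ∈ G`, hence for
`f` in the span of `{1} ∪ G`, which (as `G` is closed under multiplication) is the unital algebra
generated by `G`. That algebra separates points, and on a Polish space a point-separating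
subalgebra of `C_b` determines finite measures. -/

theorem Submonoid.coe_closure_of_mul_mem {M : Type*} [Monoid M] {s : Set M}
    (hs : ∀ a ∈ s, ∀ b ∈ s, a * b ∈ s) : (Submonoid.closure s : Set M) = {1} ∪ s := by
  rw [Submonoid.closure_eq_one_union]
  exact congrArg (fun S : Subsemigroup M => {1} ∪ (S : Set M))
    (Subsemigroup.closure_eq ⟨s, fun {a b} ha hb => hs a ha b hb⟩)

theorem BoundedContinuousFunction.integral_eq_of_mem_span {U : Type*} [TopologicalSpace U]
    [MeasurableSpace U] [OpensMeasurableSpace U] {μ ν : Measure U} [IsFiniteMeasure μ]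
    [IsFiniteMeasure ν] {s : Set (U →ᵇ ℝ)} (h : ∀ f ∈ s, ∫ x, f x ∂μ = ∫ x, f x ∂ν)
    {g : U →ᵇ ℝ} (hg : g ∈ Submodule.span ℝ s) : ∫ x, g x ∂μ = ∫ x, g x ∂ν := by
  induction hg using Submodule.span_induction with
  | mem f hf => exact h f hf
  | zero => simp
  | add f g _ _ hf hg =>
    simp only [coe_add, Pi.add_apply]
    rw [integral_add (f.integrable μ) (g.integrable μ),
      integral_add (f.integrable ν) (g.integrable ν), hf, hg]
  | smul c f _ hf =>
    simp only [coe_smul, smul_eq_mul]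
    rw [integral_const_mul, integral_const_mul, hf]

theorem StronglySeparatesPoints.exists_ne {U : Type*} [TopologicalSpace U] [T1Space U]
    {G : Set (U →ᵇ ℝ)} (hG : StronglySeparatesPoints G) {x y : U} (hxy : x ≠ y) :
    ∃ f ∈ G, f x ≠ f y := by
  obtain ⟨F, hFG, ε, hε, hF⟩ := hG x {y}ᶜ (compl_singleton_mem_nhds hxy)
  obtain ⟨f, hfF, hf⟩ := hF y (by simp)
  refine ⟨f, hFG hfF, fun hfxy => ?_⟩
  rw [hfxy, sub_self, abs_zero] at hf
  exact hε.not_ge hf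

theorem MeasureTheory.ext_of_forall_integral_eq_of_mul_mem_of_separatesPoints {U : Type*}
    [TopologicalSpace U] [PolishSpace U] [MeasurableSpace U] [BorelSpace U]
    {G : Set (U →ᵇ ℝ)} (hmul : ∀ f ∈ G, ∀ g ∈ G, f * g ∈ G)
    (hsep : ∀ ⦃x y : U⦄, x ≠ y → ∃ f ∈ G, f x ≠ f y)
    {μ ν : Measure U} [IsProbabilityMeasure μ] [IsProbabilityMeasure ν]
    (h : ∀ f ∈ G, ∫ x, f x ∂μ = ∫ x, f x ∂ν) : μ = ν := by
  refine ext_of_forall_mem_subalgebra_integral_eq_of_polish (A := StarAlgebra.adjoin ℝ G) ?_ ?_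
  · intro x y hxy
    obtain ⟨f, hfG, hf⟩ := hsep hxy
    exact ⟨_, ⟨_, ⟨f, StarAlgebra.subset_adjoin ℝ G hfG, rfl⟩, rfl⟩, hf⟩
  · have hstar : star G = G := by
      ext f
      have hf : star f = f := BoundedContinuousFunction.ext fun x => star_trivial (f x)
      rw [Set.mem_star, hf]
    intro g hg
    replace hg : g ∈ Subalgebra.toSubmodule (StarAlgebra.adjoin ℝ G).toSubalgebra := hg
    rw [StarAlgebra.adjoin_eq_span, hstar, Set.union_self,
      Submonoid.coe_closure_of_mul_mem hmul] at hg
    refine BoundedContinuousFunction.integral_eq_of_mem_span ?_ hg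
    rintro f (rfl | hf)
    · simp
    · exact h f hf

section dG

variable {U : Type*} [TopologicalSpace U] [MeasurableSpace U] {G : Set (U →ᵇ ℝ)}
  {N : (U →ᵇ ℝ) → ℝ}

theorem dG_comm (μ ν : Measure U) : dG G N μ ν = dG G N ν μ := by
  simp only [dG, abs_sub_comm (∫ x, _ ∂μ)]

theorem dG_nonneg (hN0 : ∀ f ∈ G, 0 ≤ N f) (μ ν : Measure U) : 0 ≤ dG G N μ ν := by
  refine Real.sSup_nonneg ?_
  rintro r ⟨f, hf, -, rfl⟩
  exact div_nonneg (abs_nonneg _) (add_nonneg (norm_nonneg f) (hN0 f hf))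

theorem dG_le_of_forall {μ ν : Measure U} {c : ℝ} (hc : 0 ≤ c)
    (h : ∀ f ∈ G, f ≠ 0 → |(∫ x, f x ∂μ) - ∫ x, f x ∂ν| / (‖f‖ + N f) ≤ c) :
    dG G N μ ν ≤ c :=
  Real.sSup_le (by rintro r ⟨f, hf, hf0, rfl⟩; exact h f hf hf0) hc

theorem dG_self (μ : Measure U) : dG G N μ μ = 0 := by
  refine le_antisymm (dG_le_of_forall le_rfl (by simp)) (Real.sSup_nonneg ?_)
  rintro r ⟨f, -, -, rfl⟩
  simp

variable [OpensMeasurableSpace U]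

theorem le_dG (hN0 : ∀ f ∈ G, 0 ≤ N f) {μ ν : Measure U} [IsProbabilityMeasure μ]
    [IsProbabilityMeasure ν] {f : U →ᵇ ℝ} (hf : f ∈ G) (hf0 : f ≠ 0) :
    |(∫ x, f x ∂μ) - ∫ x, f x ∂ν| / (‖f‖ + N f) ≤ dG G N μ ν := by
  refine le_csSup ⟨2, ?_⟩ ⟨f, hf, hf0, rfl⟩
  rintro r ⟨g, hg, hg0, rfl⟩
  have hgpos : 0 < ‖g‖ := norm_pos_iff.2 hg0
  rw [div_le_iff₀ (by linarith [hN0 g hg])]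
  calc |(∫ x, g x ∂μ) - ∫ x, g x ∂ν| ≤ ‖g‖ + ‖g‖ :=
        (abs_sub _ _).trans (add_le_add (g.norm_integral_le_norm μ) (g.norm_integral_le_norm ν))
    _ ≤ 2 * (‖g‖ + N g) := by linarith [hN0 g hg]

theorem dG_triangle (hN0 : ∀ f ∈ G, 0 ≤ N f) (μ ν κ : Measure U) [IsProbabilityMeasure μ]
    [IsProbabilityMeasure ν] [IsProbabilityMeasure κ] :
    dG G N μ κ ≤ dG G N μ ν + dG G N ν κ := by
  refine dG_le_of_forall (add_nonneg (dG_nonneg hN0 μ ν) (dG_nonneg hN0 ν κ)) fun f hf hf0 => ?_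
  have hpos : 0 < ‖f‖ + N f := by linarith [norm_pos_iff.2 hf0, hN0 f hf]
  calc |(∫ x, f x ∂μ) - ∫ x, f x ∂κ| / (‖f‖ + N f)
      ≤ (|(∫ x, f x ∂μ) - ∫ x, f x ∂ν| + |(∫ x, f x ∂ν) - ∫ x, f x ∂κ|) / (‖f‖ + N f) := by
        gcongr
        exact abs_sub_le _ _ _
    _ = |(∫ x, f x ∂μ) - ∫ x, f x ∂ν| / (‖f‖ + N f)
        + |(∫ x, f x ∂ν) - ∫ x, f x ∂κ| / (‖f‖ + N f) := add_div _ _ _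
    _ ≤ dG G N μ ν + dG G N ν κ := add_le_add (le_dG hN0 hf hf0) (le_dG hN0 hf hf0)

theorem integral_eq_of_dG_eq_zero (hN0 : ∀ f ∈ G, 0 ≤ N f) {μ ν : Measure U}
    [IsProbabilityMeasure μ] [IsProbabilityMeasure ν] (h : dG G N μ ν = 0) {f : U →ᵇ ℝ}
    (hf : f ∈ G) : ∫ x, f x ∂μ = ∫ x, f x ∂ν := by
  obtain rfl | hf0 := eq_or_ne f 0
  · simp
  have hpos : 0 < ‖f‖ + N f := by linarith [norm_pos_iff.2 hf0, hN0 f hf]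
  have hle := le_dG hN0 (μ := μ) (ν := ν) hf hf0
  rw [h, div_le_iff₀ hpos, zero_mul, abs_nonpos_iff, sub_eq_zero] at hle
  exact hle

theorem dG_eq_zero_iff [PolishSpace U] [BorelSpace U] (hmul : ∀ f ∈ G, ∀ g ∈ G, f * g ∈ G)
    (hsep : StronglySeparatesPoints G) (hN0 : ∀ f ∈ G, 0 ≤ N f) {μ ν : Measure U}
    [IsProbabilityMeasure μ] [IsProbabilityMeasure ν] : dG G N μ ν = 0 ↔ μ = ν :=
  ⟨fun h => ext_of_forall_integral_eq_of_mul_mem_of_separatesPoints hmul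
    (fun _ _ => hsep.exists_ne) fun _ hf => integral_eq_of_dG_eq_zero hN0 h hf,
    fun h => h ▸ dG_self μ⟩

end dG

theorem statement3_general {U : Type*} [TopologicalSpace U] [PolishSpace U]
    [MeasurableSpace U] [BorelSpace U]
    (G : Set (BoundedContinuousFunction U ℝ))
    (hmul : ∀ f ∈ G, ∀ g ∈ G, f * g ∈ G)
    (hsep : StronglySeparatesPoints G)
    (N : BoundedContinuousFunction U ℝ → ℝ)
    (hN0 : ∀ f ∈ G, 0 ≤ N f) :
    (∀ (μ ν : Measure U), IsProbabilityMeasure μ → IsProbabilityMeasure ν →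
        0 ≤ dG G N μ ν ∧ dG G N μ ν = dG G N ν μ) ∧
    (∀ (μ ν κ : Measure U), IsProbabilityMeasure μ → IsProbabilityMeasure ν →
        IsProbabilityMeasure κ → dG G N μ κ ≤ dG G N μ ν + dG G N ν κ) ∧
    (∀ (μ ν : Measure U), IsProbabilityMeasure μ → IsProbabilityMeasure ν →
        (dG G N μ ν = 0 ↔ μ = ν)) :=
  ⟨fun μ ν _ _ => ⟨dG_nonneg hN0 μ ν, dG_comm μ ν⟩,
    fun μ ν κ _ _ _ => dG_triangle hN0 μ ν κ,
    fun _ _ _ _ => dG_eq_zero_iff hmul hsep hN0⟩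

/-- For an algebra `G ⊆ C_b(U)` strongly separating points of a Polish space `U`
and a seminorm `N = ‖·‖_G` on `G`, `d_G` is a metric on the Borel probability measures on `U`:
it is (finite and) nonnegative, symmetric, satisfies the triangle inequality, and vanishes
exactly on the diagonal. -/
theorem statement3 {U : Type*} [TopologicalSpace U] [PolishSpace U]
    [MeasurableSpace U] [BorelSpace U]
    (G : Set (BoundedContinuousFunction U ℝ))
    (hadd : ∀ f ∈ G, ∀ g ∈ G, f + g ∈ G)
    (hmul : ∀ f ∈ G, ∀ g ∈ G, f * g ∈ G)
    (hsmul : ∀ (c : ℝ), ∀ f ∈ G, c • f ∈ G)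
    (hsep : StronglySeparatesPoints G)
    (N : BoundedContinuousFunction U ℝ → ℝ)
    (hN0 : ∀ f ∈ G, 0 ≤ N f)
    (hNsmul : ∀ (c : ℝ), ∀ f ∈ G, N (c • f) = |c| * N f)
    (hNadd : ∀ f ∈ G, ∀ g ∈ G, N (f + g) ≤ N f + N g) :
    (∀ (μ ν : Measure U), IsProbabilityMeasure μ → IsProbabilityMeasure ν →
        0 ≤ dG G N μ ν ∧ dG G N μ ν = dG G N ν μ) ∧
    (∀ (μ ν κ : Measure U), IsProbabilityMeasure μ → IsProbabilityMeasure ν →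
        IsProbabilityMeasure κ → dG G N μ κ ≤ dG G N μ ν + dG G N ν κ) ∧
    (∀ (μ ν : Measure U), IsProbabilityMeasure μ → IsProbabilityMeasure ν →
        (dG G N μ ν = 0 ↔ μ = ν)) :=
  statement3_general G hmul hsep N hN0
end

section
/- Let U be a Polish space, G ⊆ C_b(U) an algebra of bounded continuous real-valued functions that strongly separates points, and ‖·‖_G a seminorm on G, with d_G(μ,ν) := sup{ |∫ f dμ − ∫ f dν| / (‖f‖_∞ + ‖f‖_G) : f ∈ G, f ≠ 0 }. If (μ_n) and μ are Borel probability measures on U with d_G(μ_n, μ) → 0, then μ_n converges weakly to μ, i.e. ∫ f dμ_n → ∫ f dμ for every bounded continuous f : U → ℝ. -/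
open MeasureTheory Filter
open scoped Topology ENNReal BoundedContinuousFunction

/-!
Each `g ∈ G` satisfies `|∫ g dμₙ - ∫ g dν| ≤ (‖g‖ + N g) d_G(μₙ, ν)`, so integrals converge on `G`,
hence on the span of `G` and `1`, which is the algebra generated by `G` because `G` is closed
under products, and, integration being 1-Lipschitz for the sup norm, on its uniform closure. By the portmanteau theorem it suffices to show
`ν O ≤ liminf μₙ O` for open `O`. Since `U` is Polish, `ν` is tight, so `O` can be approximated
from inside by a compact `K`. Strong separation gives, for each `x ∈ K`, an element
`hₓ = ∑_{f ∈ F} ((f - f x) / ε)²` of the algebra vanishing at `x` and `≥ 1` off `O`. Truncating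
`hₓ` at `1` (a uniform limit of polynomials in `hₓ`) and multiplying over a finite subcover of `K`
gives `W` in the closure with `0 ≤ W ≤ 1`, `W = 1` off `O` and `W` small on `K`; then
`1 - W ≤ 𝟙_O` turns `∫ W dμₙ → ∫ W dν` into the required lower bound.
-/

open BoundedContinuousFunction
open scoped NNReal

namespace BoundedContinuousFunction

section Polynomial

open Polynomial

variable {U : Type*} [TopologicalSpace U]

theorem aeval_apply (s : U →ᵇ ℝ) (p : ℝ[X]) (u : U) : aeval s p u = p.eval (s u) := by
  rw [← coe_toContinuousMapₐ ℝ, ← aeval_algHom_apply, aeval_continuousMap_apply]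
  rfl

theorem comp_mem_topologicalClosure {A : Subalgebra ℝ (U →ᵇ ℝ)} {s : U →ᵇ ℝ} (hs : s ∈ A)
    {φ : ℝ → ℝ} {C : ℝ≥0} (hφ : LipschitzWith C φ) :
    s.comp φ hφ ∈ A.topologicalClosure := by
  rw [← SetLike.mem_coe, Subalgebra.topologicalClosure_coe, Metric.mem_closure_iff]
  intro ε hε
  obtain ⟨p, hp⟩ := exists_polynomial_near_of_continuousOn (-‖s‖) ‖s‖ φ
    hφ.continuous.continuousOn (ε / 2) (half_pos hε)
  refine ⟨aeval s p,
    Algebra.adjoin_le (Set.singleton_subset_iff.2 hs) (aeval_mem_adjoin_singleton ℝ s), ?_⟩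
  refine ((dist_le (half_pos hε).le).2 fun u => ?_).trans_lt (half_lt_self hε)
  rw [comp_apply, aeval_apply, Real.dist_eq, abs_sub_comm]
  exact (hp (s u) (abs_le.1 ((Real.norm_eq_abs _).symm.trans_le (norm_coe_le_norm s u)))).le

end Polynomial

end BoundedContinuousFunction

section StrongSeparation

variable {U : Type*} [TopologicalSpace U]

theorem StronglySeparatesPoints.mono {G H : Set (U →ᵇ ℝ)} (hG : StronglySeparatesPoints G)
    (hGH : G ⊆ H) : StronglySeparatesPoints H := fun u V hV => by
  obtain ⟨F, hFG, ε, hε, hF⟩ := hG u V hV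
  exact ⟨F, hFG.trans hGH, ε, hε, hF⟩

theorem StronglySeparatesPoints.exists_mem_apply_eq_zero_one_le {A : Subalgebra ℝ (U →ᵇ ℝ)}
    (hA : StronglySeparatesPoints (A : Set (U →ᵇ ℝ))) {x : U} {V : Set U} (hV : V ∈ 𝓝 x) :
    ∃ h ∈ A, (∀ u, 0 ≤ h u) ∧ h x = 0 ∧ ∀ u ∉ V, 1 ≤ h u := by
  obtain ⟨F, hFA, ε, hε, hF⟩ := hA x V hV
  let h : U →ᵇ ℝ := ∑ f ∈ F, (ε⁻¹ • (f - algebraMap ℝ (U →ᵇ ℝ) (f x))) ^ 2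
  have h_apply (u : U) : h u = ∑ f ∈ F, (ε⁻¹ * (f u - f x)) ^ 2 := by
    simp [h, coe_sum, BoundedContinuousFunction.algebraMap_apply]
  refine ⟨h, A.sum_mem fun f hf =>
      pow_mem (A.smul_mem (sub_mem (hFA hf) (A.algebraMap_mem _)) _) 2,
    fun u => h_apply u ▸ Finset.sum_nonneg fun f _ => sq_nonneg _, by simp [h_apply],
    fun u hu => ?_⟩
  obtain ⟨f, hfF, hfu⟩ := hF u hu
  calc 1 ≤ (ε⁻¹ * (f u - f x)) ^ 2 := by
        rw [mul_pow, inv_pow, ← sq_abs (f u - f x), inv_mul_eq_div, one_le_div (by positivity)]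
        gcongr
    _ ≤ h u := h_apply u ▸ Finset.single_le_sum (fun f _ => sq_nonneg (ε⁻¹ * (f u - f x))) hfF

theorem StronglySeparatesPoints.exists_mem_topologicalClosure {A : Subalgebra ℝ (U →ᵇ ℝ)}
    (hA : StronglySeparatesPoints (A : Set (U →ᵇ ℝ))) {K O : Set U} (hK : IsCompact K)
    (hO : O ∈ 𝓝ˢ K) {τ : ℝ} (hτ : 0 < τ) :
    ∃ W ∈ A.topologicalClosure, (∀ u, 0 ≤ W u ∧ W u ≤ 1) ∧ (∀ u ∉ O, W u = 1) ∧
      ∀ u ∈ K, W u < τ := by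
  classical
  choose! h hhA hh0 hhx hh1 using fun x (hx : x ∈ K) =>
    hA.exists_mem_apply_eq_zero_one_le (mem_nhdsSet_iff_forall.1 hO x hx)
  obtain ⟨t, htK, hKt⟩ := hK.elim_nhds_subcover (fun x => {u | h x u < τ}) fun x hx =>
    (isOpen_lt (h x).continuous continuous_const).mem_nhds (by simpa [hhx x hx] using hτ)
  let m (x : U) : U →ᵇ ℝ := (h x).comp (fun y => min y 1) (LipschitzWith.id.min_const 1)
  have hm0 (x : U) (hx : x ∈ t) (u : U) : 0 ≤ m x u := le_min (hh0 x (htK x hx) u) zero_le_one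
  have hm1 (x : U) (u : U) : m x u ≤ 1 := min_le_right _ _
  have hW (u : U) : (∏ x ∈ t, m x) u = ∏ x ∈ t, m x u := by simp [coe_prod]
  refine ⟨∏ x ∈ t, m x,
    prod_mem fun x hx => comp_mem_topologicalClosure (hhA x (htK x hx)) _,
    fun u => hW u ▸ ⟨Finset.prod_nonneg fun x hx => hm0 x hx u,
      Finset.prod_le_one (fun x hx => hm0 x hx u) fun x _ => hm1 x u⟩,
    fun u hu => hW u ▸ Finset.prod_eq_one fun x hx => min_eq_right (hh1 x (htK x hx) u hu),
    fun u hu => ?_⟩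
  obtain ⟨x, hxt, hxu⟩ := Set.mem_iUnion₂.1 (hKt hu)
  calc (∏ x ∈ t, m x) u = m x u * ∏ y ∈ t.erase x, m y u := by
        rw [hW, Finset.mul_prod_erase _ (fun y => m y u) hxt]
    _ ≤ m x u := mul_le_of_le_one_right (hm0 x hxt u)
        (Finset.prod_le_one (fun y hy => hm0 y (Finset.mem_of_mem_erase hy) u) fun y _ => hm1 y u)
    _ ≤ h x u := min_le_left _ _
    _ < τ := hxu

end StrongSeparation

theorem Algebra.toSubmodule_adjoin_le_of_mul_mem {R A : Type*} [CommSemiring R] [Semiring A]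
    [Algebra R A] {s : Set A} (hs : ∀ a ∈ s, ∀ b ∈ s, a * b ∈ s) {M : Submodule R A}
    (h1 : (1 : A) ∈ M) (hsM : s ⊆ M) : Subalgebra.toSubmodule (Algebra.adjoin R s) ≤ M := by
  have hclosure (a : A) (ha : a ∈ Submonoid.closure s) : a = 1 ∨ a ∈ s := by
    induction ha using Submonoid.closure_induction with
    | mem a ha => exact Or.inr ha
    | one => exact Or.inl rfl
    | mul a b _ _ ha hb =>
      rcases ha with rfl | ha
      · simpa using hb
      · rcases hb with rfl | hb
        · simpa using Or.inr ha
        · exact Or.inr (hs a ha b hb)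
  rw [Algebra.adjoin_eq_span, Submodule.span_le]
  intro a ha
  rcases hclosure a ha with rfl | ha
  exacts [h1, hsM ha]

namespace BoundedContinuousFunction

variable {U : Type*} [TopologicalSpace U] [MeasurableSpace U] [OpensMeasurableSpace U]

theorem lipschitzWith_integral (μ : Measure U) [IsProbabilityMeasure μ] :
    LipschitzWith 1 fun f : U →ᵇ ℝ => ∫ x, f x ∂μ :=
  LipschitzWith.of_dist_le_mul fun f g => by
    rw [NNReal.coe_one, one_mul, Real.dist_eq, dist_eq_norm,
      ← integral_sub (f.integrable μ) (g.integrable μ)]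
    exact (f - g).norm_integral_le_norm μ

theorem measure_lt_le_ofReal_one_sub_integral_add (ν : Measure U) [IsProbabilityMeasure ν]
    {W : U →ᵇ ℝ} (hW1 : ∀ u, W u ≤ 1) (τ : ℝ≥0) :
    ν {u | W u < τ} ≤ ENNReal.ofReal (1 - ∫ x, W x ∂ν) + τ := by
  set S := {u | W u < τ}
  have hS : MeasurableSet S := (isOpen_lt W.continuous continuous_const).measurableSet
  have hint : ∫ x, W x ∂ν ≤ τ + ν.real Sᶜ :=
    calc ∫ x, W x ∂ν ≤ ∫ x, ((τ : ℝ) + Sᶜ.indicator 1 x) ∂ν :=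
          integral_mono (W.integrable ν) ((integrable_const _).add
            ((integrable_const 1).indicator hS.compl)) fun x => by
              by_cases hx : x ∈ S
              · simpa [hx] using (hx.le : W x ≤ τ)
              · simpa [hx] using (hW1 x).trans (le_add_of_nonneg_left τ.2)
      _ = τ + ν.real Sᶜ := by
          rw [integral_add (integrable_const _) ((integrable_const 1).indicator hS.compl),
            integral_indicator_one hS.compl]
          simp
  rw [probReal_compl_eq_one_sub hS] at hint
  calc ν S = ENNReal.ofReal (ν.real S) := (ENNReal.ofReal_toReal (measure_ne_top ν S)).symm
    _ ≤ ENNReal.ofReal (1 - ∫ x, W x ∂ν + τ) := ENNReal.ofReal_le_ofReal (by linarith)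
    _ ≤ ENNReal.ofReal (1 - ∫ x, W x ∂ν) + τ := by
        simpa using ENNReal.ofReal_add_le (p := 1 - ∫ x, W x ∂ν) (q := τ)

variable (μ : ℕ → Measure U) (ν : Measure U)

def tendstoIntegralSubmodule [∀ n, IsFiniteMeasure (μ n)] [IsFiniteMeasure ν] :
    Submodule ℝ (U →ᵇ ℝ) where
  carrier := {f | Tendsto (fun n => ∫ x, f x ∂μ n) atTop (𝓝 (∫ x, f x ∂ν))}
  add_mem' {f g} hf hg := by
    simpa only [Set.mem_ofPred_eq, coe_add, Pi.add_apply,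
      integral_add (f.integrable _) (g.integrable _)] using hf.add hg
  zero_mem' := by simp
  smul_mem' c f hf := by
    simpa only [Set.mem_ofPred_eq, coe_smul, smul_eq_mul, integral_const_mul] using hf.const_mul c

variable [∀ n, IsProbabilityMeasure (μ n)] [IsProbabilityMeasure ν]

theorem one_mem_tendstoIntegralSubmodule : (1 : U →ᵇ ℝ) ∈ tendstoIntegralSubmodule μ ν := by
  simp [tendstoIntegralSubmodule]

theorem isClosed_tendstoIntegralSubmodule :
    IsClosed (tendstoIntegralSubmodule μ ν : Set (U →ᵇ ℝ)) :=
  ((LipschitzWith.uniformEquicontinuous _ 1 fun n => lipschitzWith_integral (μ n)).equicontinuous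
    ).isClosed_setOfPred_tendsto (lipschitzWith_integral ν).continuous

theorem ofReal_one_sub_integral_le_liminf_measure {O : Set U} (hO : MeasurableSet O)
    {W : U →ᵇ ℝ} (hW0 : ∀ u, 0 ≤ W u) (hWO : ∀ u ∉ O, 1 ≤ W u)
    (hW : W ∈ tendstoIntegralSubmodule μ ν) :
    ENNReal.ofReal (1 - ∫ x, W x ∂ν) ≤ atTop.liminf fun n => μ n O := by
  have hle (n : ℕ) : ENNReal.ofReal (1 - ∫ x, W x ∂μ n) ≤ μ n O := by
    refine ENNReal.ofReal_le_of_le_toReal ?_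
    calc 1 - ∫ x, W x ∂μ n = ∫ x, (1 - W x) ∂μ n := by
          rw [integral_sub (integrable_const 1) (W.integrable _), integral_const]; simp
      _ ≤ ∫ x, O.indicator 1 x ∂μ n :=
          integral_mono ((integrable_const 1).sub (W.integrable _))
            ((integrable_const 1).indicator hO) fun x => by
              by_cases hx : x ∈ O
              · simpa [hx] using hW0 x
              · simpa [hx] using hWO x hx
      _ = (μ n O).toReal := integral_indicator_one hO
  have hlim : Tendsto (fun n => ENNReal.ofReal (1 - ∫ x, W x ∂μ n)) atTop
      (𝓝 (ENNReal.ofReal (1 - ∫ x, W x ∂ν))) :=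
    (ENNReal.continuous_ofReal.tendsto _).comp (tendsto_const_nhds.sub hW)
  exact hlim.liminf_eq.symm.trans_le (liminf_le_liminf (Eventually.of_forall hle))

theorem measure_le_liminf_measure_of_stronglySeparatesPoints [ν.InnerRegularCompactLTTop]
    {A : Subalgebra ℝ (U →ᵇ ℝ)} (hA : StronglySeparatesPoints (A : Set (U →ᵇ ℝ)))
    (hconv : (A : Set (U →ᵇ ℝ)) ⊆ tendstoIntegralSubmodule μ ν) {O : Set U} (hO : IsOpen O) :
    ν O ≤ atTop.liminf fun n => μ n O := by
  have hclosure : (A.topologicalClosure : Set (U →ᵇ ℝ)) ⊆ tendstoIntegralSubmodule μ ν := by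
    rw [Subalgebra.topologicalClosure_coe]
    exact closure_minimal hconv (isClosed_tendstoIntegralSubmodule μ ν)
  refine ENNReal.le_of_forall_pos_le_add fun ε hε _ => ?_
  obtain ⟨K, hKO, hK, hOK⟩ := hO.measurableSet.exists_isCompact_lt_add (measure_ne_top ν O)
    (ENNReal.coe_ne_zero.2 (half_pos hε).ne')
  obtain ⟨W, hWA, hW01, hWO, hWK⟩ :=
    hA.exists_mem_topologicalClosure hK (hO.mem_nhdsSet.2 hKO) (half_pos hε)
  calc ν O ≤ ν K + ↑(ε / 2) := hOK.le
    _ ≤ ν {u | W u < ↑(ε / 2)} + ↑(ε / 2) := by gcongr; exact hWK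
    _ ≤ ENNReal.ofReal (1 - ∫ x, W x ∂ν) + ↑(ε / 2) + ↑(ε / 2) := by
        gcongr; exact measure_lt_le_ofReal_one_sub_integral_add ν (fun u => (hW01 u).2) _
    _ ≤ (atTop.liminf fun n => μ n O) + ↑(ε / 2) + ↑(ε / 2) := by
        gcongr
        exact ofReal_one_sub_integral_le_liminf_measure μ ν hO.measurableSet
          (fun u => (hW01 u).1) (fun u hu => (hWO u hu).ge) (hclosure hWA)
    _ = (atTop.liminf fun n => μ n O) + ε := by rw [add_assoc, ← ENNReal.coe_add, add_halves]

theorem tendsto_integral_of_stronglySeparatesPoints [ν.InnerRegularCompactLTTop]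
    {A : Subalgebra ℝ (U →ᵇ ℝ)} (hA : StronglySeparatesPoints (A : Set (U →ᵇ ℝ)))
    (hconv : (A : Set (U →ᵇ ℝ)) ⊆ tendstoIntegralSubmodule μ ν) (f : U →ᵇ ℝ) :
    Tendsto (fun n => ∫ x, f x ∂μ n) atTop (𝓝 (∫ x, f x ∂ν)) :=
  tendsto_integral_of_forall_integral_le_liminf_integral (fun _ hf =>
    integral_le_liminf_integral_of_forall_isOpen_measure_le_liminf_measure hf fun _ hO =>
      measure_le_liminf_measure_of_stronglySeparatesPoints μ ν hA hconv hO) f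

end BoundedContinuousFunction

section DG

variable {U : Type*} [TopologicalSpace U] [MeasurableSpace U] [OpensMeasurableSpace U]
  {G : Set (U →ᵇ ℝ)} {N : (U →ᵇ ℝ) → ℝ}

theorem abs_integral_sub_le_mul_dG (hN0 : ∀ f ∈ G, 0 ≤ N f) (μ ν : Measure U)
    [IsProbabilityMeasure μ] [IsProbabilityMeasure ν] {f : U →ᵇ ℝ} (hf : f ∈ G) :
    |∫ x, f x ∂μ - ∫ x, f x ∂ν| ≤ (‖f‖ + N f) * dG G N μ ν := by
  have hdenom {g : U →ᵇ ℝ} (hg : g ∈ G) (hg0 : g ≠ 0) : 0 < ‖g‖ + N g :=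
    add_pos_of_pos_of_nonneg (norm_pos_iff.2 hg0) (hN0 g hg)
  have hbdd : BddAbove {r : ℝ | ∃ g ∈ G, g ≠ 0 ∧
      r = |∫ x, g x ∂μ - ∫ x, g x ∂ν| / (‖g‖ + N g)} := by
    refine ⟨2, ?_⟩
    rintro _ ⟨g, hg, hg0, rfl⟩
    rw [div_le_iff₀ (hdenom hg hg0)]
    have hμ := g.norm_integral_le_norm μ
    have hν := g.norm_integral_le_norm ν
    rw [Real.norm_eq_abs] at hμ hν
    linarith [abs_sub (∫ x, g x ∂μ) (∫ x, g x ∂ν), hN0 g hg]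
  rcases eq_or_ne f 0 with rfl | hf0
  · simpa [dG] using mul_nonneg (hN0 0 hf)
      (Real.sSup_nonneg (by
        rintro _ ⟨g, hg, hg0, rfl⟩
        exact div_nonneg (abs_nonneg _) (hdenom hg hg0).le))
  · rw [mul_comm, ← div_le_iff₀ (hdenom hf hf0)]
    exact le_csSup hbdd ⟨f, hf, hf0, rfl⟩

theorem tendsto_integral_of_tendsto_dG (hN0 : ∀ f ∈ G, 0 ≤ N f) {μ : ℕ → Measure U}
    {ν : Measure U} [∀ n, IsProbabilityMeasure (μ n)] [IsProbabilityMeasure ν]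
    (htend : Tendsto (fun n => dG G N (μ n) ν) atTop (𝓝 0)) {f : U →ᵇ ℝ} (hf : f ∈ G) :
    Tendsto (fun n => ∫ x, f x ∂μ n) atTop (𝓝 (∫ x, f x ∂ν)) := by
  rw [tendsto_iff_norm_sub_tendsto_zero]
  have hbound := htend.const_mul (‖f‖ + N f)
  rw [mul_zero] at hbound
  exact squeeze_zero (fun n => norm_nonneg _) (fun n => abs_integral_sub_le_mul_dG hN0 _ _ hf)
    hbound

end DG

theorem statement4_general {U : Type*} [TopologicalSpace U] [PolishSpace U]
    [MeasurableSpace U] [BorelSpace U]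
    (G : Set (BoundedContinuousFunction U ℝ))
    (hmul : ∀ f ∈ G, ∀ g ∈ G, f * g ∈ G)
    (hsep : StronglySeparatesPoints G)
    (N : BoundedContinuousFunction U ℝ → ℝ)
    (hN0 : ∀ f ∈ G, 0 ≤ N f)
    (μ : ℕ → Measure U) (ν : Measure U)
    (hμprob : ∀ n, IsProbabilityMeasure (μ n)) (hνprob : IsProbabilityMeasure ν)
    (htend : Tendsto (fun n => dG G N (μ n) ν) atTop (𝓝 0)) :
    ∀ f : BoundedContinuousFunction U ℝ,
      Tendsto (fun n => ∫ x, f x ∂(μ n)) atTop (𝓝 (∫ x, f x ∂ν)) := by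
  have hG : G ⊆ tendstoIntegralSubmodule μ ν := fun _ hf =>
    tendsto_integral_of_tendsto_dG hN0 htend hf
  exact tendsto_integral_of_stronglySeparatesPoints μ ν (hsep.mono Algebra.subset_adjoin)
    (Algebra.toSubmodule_adjoin_le_of_mul_mem hmul (one_mem_tendstoIntegralSubmodule μ ν) hG)

/-- For an algebra `G ⊆ C_b(U)` strongly separating points of a Polish space `U`
and a seminorm `N = ‖·‖_G` on `G`: convergence of Borel probability measures in the metric `d_G`
implies weak convergence. -/
theorem statement4 {U : Type*} [TopologicalSpace U] [PolishSpace U]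
    [MeasurableSpace U] [BorelSpace U]
    (G : Set (BoundedContinuousFunction U ℝ))
    (hadd : ∀ f ∈ G, ∀ g ∈ G, f + g ∈ G)
    (hmul : ∀ f ∈ G, ∀ g ∈ G, f * g ∈ G)
    (hsmul : ∀ (c : ℝ), ∀ f ∈ G, c • f ∈ G)
    (hsep : StronglySeparatesPoints G)
    (N : BoundedContinuousFunction U ℝ → ℝ)
    (hN0 : ∀ f ∈ G, 0 ≤ N f)
    (hNsmul : ∀ (c : ℝ), ∀ f ∈ G, N (c • f) = |c| * N f)
    (hNadd : ∀ f ∈ G, ∀ g ∈ G, N (f + g) ≤ N f + N g)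
    (μ : ℕ → Measure U) (ν : Measure U)
    (hμprob : ∀ n, IsProbabilityMeasure (μ n)) (hνprob : IsProbabilityMeasure ν)
    (htend : Tendsto (fun n => dG G N (μ n) ν) atTop (𝓝 0)) :
    ∀ f : BoundedContinuousFunction U ℝ,
      Tendsto (fun n => ∫ x, f x ∂(μ n)) atTop (𝓝 (∫ x, f x ∂ν)) :=
  statement4_general G hmul hsep N hN0 μ ν hμprob hνprob htend
end

section
/- Let U and A be Polish spaces, let ν₀ be a Borel probability measure on U, and let t ↦ μ_t be a measurable map from [0,∞) to the Borel probability measures on U × A (with the weak topology), writing μ_t^U and μ_t^A for the marginals. Let ψ_U : U → [0,∞) and ψ_A : A → [0,∞) be continuous, let Λ₁, L_U, L_A, Λ_A > 0, let (φ_n)_{n∈ℕ} ⊆ C_b(U) be nonnegative, pointwise nondecreasing in n and converging pointwise to ψ_U, and let (g_n)_{n∈ℕ} be continuous functions on U × A × [0,∞) with |g_n(u,a,t)| ≤ Λ₁(1 + ψ_U(u) + ψ_A(a)) for all n, u, a, t. Assume: (a) ∫ ψ_U dν₀ ≤ L_U; (b) ∫_A ψ_A(a) μ_t^A(da) ≤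 L_A e^{Λ_A t} for all t ≥ 0; (c) the function t ↦ ∫ ψ_U dμ_t^U is finite, measurable, and bounded on bounded intervals; and (d) for all n and all t ≥ 0, ∫ φ_n dμ_t^U − ∫ φ_n dν₀ = ∫₀^t ∫_{U×A} g_n(u,a,s) μ_s(du × da) ds. Then for all t ≥ 0: ∫ ψ_U dμ_t^U ≤ ( L_U + Λ₁ t + (Λ₁ L_A / Λ_A)(e^{Λ_A t} − 1) ) e^{Λ₁ t}. -/
/-!
Write `m t = ∫ ψ_U dμ_t^U`. Testing the forward equation against `φ_n` and bounding
`|g_n| ≤ Λ₁ (1 + ψ_U + ψ_A)` gives `∫ φ_n dμ_t^U ≤ L_U + ∫₀ᵗ Λ₁ (1 + m s + L_A e^{Λ_A s}) ds`, and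
monotone convergence in `n` turns this into the integral inequality
`m t ≤ L_U + Λ₁ t + (Λ₁ L_A / Λ_A)(e^{Λ_A t} - 1) + Λ₁ ∫₀ᵗ m`.
As `m` is bounded on `[0, t]`, Picard iteration of this inequality yields Grönwall's bound.
-/

open MeasureTheory Filter Set Real
open scoped Topology ENNReal

section Gronwall

open scoped Nat

theorem mul_integral_Ioc_exp_mul (c : ℝ) {s : ℝ} (hs : 0 ≤ s) :
    c * ∫ r in Ioc 0 s, exp (c * r) = exp (c * s) - 1 := by
  rw [← intervalIntegral.integral_of_le hs, ← intervalIntegral.integral_const_mul,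
    intervalIntegral.integral_eq_sub_of_hasDerivAt
      (fun r _ => by simpa [mul_comm] using ((hasDerivAt_id r).const_mul c).exp)
      (Continuous.intervalIntegrable (by fun_prop) _ _)]
  simp

theorem mul_integral_Ioc_pow_div_factorial (K : ℝ) (n : ℕ) {s : ℝ} (hs : 0 ≤ s) :
    K * ∫ r in Ioc 0 s, (K * r) ^ n / n ! = (K * s) ^ (n + 1) / (n + 1)! := by
  have hderiv (r : ℝ) : HasDerivAt (fun r => (K * r) ^ (n + 1) / (n + 1)!)
      (K * ((K * r) ^ n / n !)) r := by
    refine ((((hasDerivAt_id' r).const_mul K).pow (n + 1)).div_const _).congr_deriv ?_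
    rw [Nat.factorial_succ]
    push_cast
    field_simp
  rw [← intervalIntegral.integral_of_le hs, ← intervalIntegral.integral_const_mul,
    intervalIntegral.integral_eq_sub_of_hasDerivAt (fun r _ => hderiv r)
      (Continuous.intervalIntegrable (by fun_prop) _ _)]
  simp

theorem le_mul_pow_div_factorial_of_le_mul_integral {u : ℝ → ℝ} {t K C : ℝ} (hK : 0 ≤ K)
    (hu : IntegrableOn u (Ioc 0 t)) (huC : ∀ s ∈ Icc 0 t, u s ≤ C)
    (hrec : ∀ s ∈ Icc 0 t, u s ≤ K * ∫ r in Ioc 0 s, u r) (n : ℕ) :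
    ∀ s ∈ Icc 0 t, u s ≤ C * ((K * s) ^ n / n !) := by
  induction n with
  | zero => simpa using huC
  | succ n ih =>
    intro s hs
    calc u s ≤ K * ∫ r in Ioc 0 s, u r := hrec s hs
      _ ≤ K * ∫ r in Ioc 0 s, C * ((K * r) ^ n / n !) := by
        refine mul_le_mul_of_nonneg_left (setIntegral_mono_on
          (hu.mono_set (Ioc_subset_Ioc_right hs.2))
          (by fun_prop : Continuous fun r => C * ((K * r) ^ n / n !)).integrableOn_Ioc
          measurableSet_Ioc fun r hr => ih r ⟨hr.1.le, hr.2.trans hs.2⟩) hK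
      _ = C * ((K * s) ^ (n + 1) / (n + 1)!) := by
        rw [integral_const_mul, mul_left_comm, mul_integral_Ioc_pow_div_factorial K n hs.1]

theorem nonpos_of_le_mul_integral {u : ℝ → ℝ} {t K C : ℝ} (ht : 0 ≤ t) (hK : 0 ≤ K)
    (hu : IntegrableOn u (Ioc 0 t)) (huC : ∀ s ∈ Icc 0 t, u s ≤ C)
    (hrec : ∀ s ∈ Icc 0 t, u s ≤ K * ∫ r in Ioc 0 s, u r) : u t ≤ 0 :=
  ge_of_tendsto'
    (by simpa using (FloorSemiring.tendsto_pow_div_factorial_atTop (K * t)).const_mul C)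
    fun n => le_mul_pow_div_factorial_of_le_mul_integral hK hu huC hrec n t ⟨ht, le_rfl⟩

theorem le_mul_exp_of_le_add_mul_integral {f : ℝ → ℝ} {t K B C : ℝ} (ht : 0 ≤ t) (hK : 0 ≤ K)
    (hB : 0 ≤ B) (hf : IntegrableOn f (Ioc 0 t)) (hfC : ∀ s ∈ Icc 0 t, f s ≤ C)
    (hrec : ∀ s ∈ Icc 0 t, f s ≤ B + K * ∫ r in Ioc 0 s, f r) :
    f t ≤ B * exp (K * t) := by
  have hexp (s : ℝ) : IntegrableOn (fun r => B * exp (K * r)) (Ioc 0 s) :=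
    (by fun_prop : Continuous fun r => B * exp (K * r)).integrableOn_Ioc
  suffices f t - B * exp (K * t) ≤ 0 by linarith
  -- `B e^{K s} = B + K ∫₀ˢ B e^{K r} dr`, so `f - B e^{K ·}` satisfies the homogeneous inequality.
  refine nonpos_of_le_mul_integral (u := fun s => f s - B * exp (K * s)) (C := C) ht hK
    (hf.sub (hexp t)) (fun s hs => ?_) (fun s hs => ?_)
  · linarith [hfC s hs, show 0 ≤ B * exp (K * s) by positivity]
  · rw [integral_sub (hf.mono_set (Ioc_subset_Ioc_right hs.2)) (hexp s), integral_const_mul,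
      mul_sub, mul_left_comm, mul_integral_Ioc_exp_mul K hs.1]
    linarith [hrec s hs]

end Gronwall

theorem integrable_and_integral_le_of_lintegral_ofReal_le {α : Type*} [MeasurableSpace α]
    {μ : Measure α} {f : α → ℝ} {c : ℝ} (hf : 0 ≤ᵐ[μ] f) (hfm : AEStronglyMeasurable f μ)
    (hc : 0 ≤ c) (h : ∫⁻ x, ENNReal.ofReal (f x) ∂μ ≤ ENNReal.ofReal c) :
    Integrable f μ ∧ ∫ x, f x ∂μ ≤ c := by
  refine ⟨(lintegral_ofReal_ne_top_iff_integrable hfm hf).1 (ne_top_of_le_ne_top (by simp) h), ?_⟩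
  rw [integral_eq_lintegral_of_nonneg_ae hf hfm]
  exact ENNReal.toReal_le_of_le_ofReal hc h

theorem integrableOn_toReal_of_le {α : Type*} [MeasurableSpace α] {μ : Measure α} {S : Set α}
    {F : α → ℝ≥0∞} {C : ℝ≥0∞} (hS : MeasurableSet S) (hμS : μ S ≠ ∞) (hF : Measurable F)
    (hC : C ≠ ∞) (hle : ∀ x ∈ S, F x ≤ C) : IntegrableOn (fun x => (F x).toReal) S μ :=
  Measure.integrableOn_of_bounded (M := C.toReal) hμS hF.ennreal_toReal.aestronglyMeasurable <|
    (ae_restrict_iff' hS).2 <| ae_of_all _ fun x hx => by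
      rw [Real.norm_eq_abs, abs_of_nonneg ENNReal.toReal_nonneg]
      exact ENNReal.toReal_mono hC (hle x hx)

theorem norm_integral_le_of_abs_le_mul_one_add_add {U A : Type*} [MeasurableSpace U]
    [MeasurableSpace A] {ν : Measure (U × A)} [IsProbabilityMeasure ν] {h : U × A → ℝ}
    {ψU : U → ℝ} {ψA : A → ℝ} {Λ : ℝ} (hψU : Integrable ψU (ν.map Prod.fst))
    (hψA : Integrable ψA (ν.map Prod.snd)) (hh : ∀ x, |h x| ≤ Λ * (1 + ψU x.1 + ψA x.2)) :
    ‖∫ x, h x ∂ν‖ ≤ Λ * (1 + ∫ u, ψU u ∂(ν.map Prod.fst) + ∫ a, ψA a ∂(ν.map Prod.snd)) := by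
  have hU : Integrable (fun x : U × A => ψU x.1) ν := hψU.comp_measurable measurable_fst
  have hA : Integrable (fun x : U × A => ψA x.2) ν := hψA.comp_measurable measurable_snd
  have h1U : Integrable (fun x : U × A => 1 + ψU x.1) ν := (integrable_const 1).fun_add hU
  calc ‖∫ x, h x ∂ν‖ ≤ ∫ x, Λ * (1 + ψU x.1 + ψA x.2) ∂ν :=
        norm_integral_le_of_norm_le ((h1U.fun_add hA).const_mul Λ) (ae_of_all _ hh)
    _ = Λ * (1 + ∫ u, ψU u ∂(ν.map Prod.fst) + ∫ a, ψA a ∂(ν.map Prod.snd)) := by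
        rw [integral_const_mul, integral_add h1U hA,
          integral_add (integrable_const 1) hU, integral_map measurable_fst.aemeasurable
            hψU.aestronglyMeasurable, integral_map measurable_snd.aemeasurable
            hψA.aestronglyMeasurable]
        simp

theorem integral_le_add_setIntegral_of_monotone_of_sub_eq {α β : Type*} [MeasurableSpace α]
    [MeasurableSpace β] {ν₀ ν : Measure α} {ρ : Measure β} {φ : ℕ → α → ℝ} {ψ : α → ℝ}
    {S : Set β} {H : ℕ → β → ℝ} {D : β → ℝ}
    (hφ₀ : ∀ n, Integrable (φ n) ν₀) (hφ : ∀ n, Integrable (φ n) ν)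
    (hψ₀ : Integrable ψ ν₀) (hψ : Integrable ψ ν) (hmono : ∀ x, Monotone fun n => φ n x)
    (hlim : ∀ x, Tendsto (fun n => φ n x) atTop (𝓝 (ψ x))) (hS : MeasurableSet S)
    (hD : IntegrableOn D S ρ) (hHD : ∀ n, ∀ s ∈ S, ‖H n s‖ ≤ D s)
    (heq : ∀ n, ∫ x, φ n x ∂ν - ∫ x, φ n x ∂ν₀ = ∫ s in S, H n s ∂ρ) :
    ∫ x, ψ x ∂ν ≤ ∫ x, ψ x ∂ν₀ + ∫ s in S, D s ∂ρ := by
  refine le_of_tendsto' (integral_tendsto_of_tendsto_of_monotone hφ hψ (ae_of_all _ hmono)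
    (ae_of_all _ hlim)) fun n => ?_
  have hφψ : ∫ x, φ n x ∂ν₀ ≤ ∫ x, ψ x ∂ν₀ :=
    integral_mono (hφ₀ n) hψ₀ fun x => (hmono x).ge_of_tendsto (hlim x) n
  have hHD : ∫ s in S, H n s ∂ρ ≤ ∫ s in S, D s ∂ρ :=
    (le_abs_self _).trans <| norm_integral_le_of_norm_le hD <|
      (ae_restrict_iff' hS).2 (ae_of_all _ (hHD n))
  linarith [heq n]

theorem integral_Ioc_mul_one_add_add_mul_exp {f : ℝ → ℝ} {s c : ℝ} (Λ M : ℝ) (hs : 0 ≤ s)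
    (hc : c ≠ 0) (hf : IntegrableOn f (Ioc 0 s)) :
    ∫ r in Ioc 0 s, Λ * (1 + f r + M * exp (c * r))
      = Λ * s + Λ * M / c * (exp (c * s) - 1) + Λ * ∫ r in Ioc 0 s, f r := by
  have hexp : IntegrableOn (fun r => M * exp (c * r)) (Ioc 0 s) :=
    (by fun_prop : Continuous fun r => M * exp (c * r)).integrableOn_Ioc
  have h1 : IntegrableOn (fun _ => (1 : ℝ)) (Ioc 0 s) := integrableOn_const measure_Ioc_lt_top.ne
  rw [integral_const_mul, integral_add (h1.fun_add hf) hexp, integral_add h1 hf,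
    integral_const_mul, setIntegral_const]
  have hI : ∫ r in Ioc 0 s, exp (c * r) = (exp (c * s) - 1) / c := by
    rw [eq_div_iff hc, mul_comm, mul_integral_Ioc_exp_mul c hs]
  simp only [measureReal_def, Real.volume_Ioc, sub_zero, ENNReal.toReal_ofReal hs, smul_eq_mul,
    hI]
  ring

theorem integral_map_fst_le_of_forward_equation {U A : Type*} [TopologicalSpace U]
    [MeasurableSpace U] [OpensMeasurableSpace U] [MeasurableSpace A]
    {ν₀ : Measure U} [IsProbabilityMeasure ν₀] {μ : ℝ → Measure (U × A)}
    (hμ : ∀ s, IsProbabilityMeasure (μ s)) {ψU : U → ℝ} {ψA : A → ℝ}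
    {φ : ℕ → BoundedContinuousFunction U ℝ} {g : ℕ → U × A × ℝ → ℝ} {t Λ LU LA ΛA : ℝ}
    (ht : 0 ≤ t) (hΛ : 0 ≤ Λ) (hΛA : ΛA ≠ 0)
    (hφmono : ∀ u, Monotone fun n => φ n u)
    (hφlim : ∀ u, Tendsto (fun n => φ n u) atTop (𝓝 (ψU u)))
    (hg : ∀ n u a s, 0 ≤ s → |g n (u, a, s)| ≤ Λ * (1 + ψU u + ψA a))
    (hψ₀ : Integrable ψU ν₀) (hψ₀_le : ∫ u, ψU u ∂ν₀ ≤ LU)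
    (hψU : ∀ s, 0 ≤ s → Integrable ψU ((μ s).map Prod.fst))
    (hψA : ∀ s, 0 ≤ s → Integrable ψA ((μ s).map Prod.snd))
    (hψA_le : ∀ s, 0 ≤ s → ∫ a, ψA a ∂((μ s).map Prod.snd) ≤ LA * exp (ΛA * s))
    (hf : IntegrableOn (fun s => ∫ u, ψU u ∂((μ s).map Prod.fst)) (Ioc 0 t))
    (hd : ∀ n, (∫ u, φ n u ∂((μ t).map Prod.fst)) - (∫ u, φ n u ∂ν₀)
        = ∫ s in Ioc 0 t, ∫ x : U × A, g n (x.1, x.2, s) ∂(μ s)) :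
    ∫ u, ψU u ∂((μ t).map Prod.fst)
      ≤ LU + Λ * t + Λ * LA / ΛA * (exp (ΛA * t) - 1)
        + Λ * ∫ s in Ioc 0 t, ∫ u, ψU u ∂((μ s).map Prod.fst) := by
  have hD : IntegrableOn (fun s => Λ * (1 + ∫ u, ψU u ∂((μ s).map Prod.fst)
      + LA * exp (ΛA * s))) (Ioc 0 t) :=
    (((integrableOn_const measure_Ioc_lt_top.ne).fun_add hf).fun_add
      (Continuous.integrableOn_Ioc (by fun_prop))).const_mul Λ
  have hgD (n : ℕ) : ∀ s ∈ Ioc 0 t, ‖∫ x : U × A, g n (x.1, x.2, s) ∂(μ s)‖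
      ≤ Λ * (1 + ∫ u, ψU u ∂((μ s).map Prod.fst) + LA * exp (ΛA * s)) := fun s hs => by
    have := hμ s
    refine (norm_integral_le_of_abs_le_mul_one_add_add (hψU s hs.1.le) (hψA s hs.1.le)
      fun x => hg n x.1 x.2 s hs.1.le).trans ?_
    gcongr
    exact hψA_le s hs.1.le
  have := hμ t
  have := integral_le_add_setIntegral_of_monotone_of_sub_eq (fun n => (φ n).integrable _)
    (fun n => (φ n).integrable _) hψ₀ (hψU t ht) hφmono hφlim measurableSet_Ioc hD hgD hd
  rw [integral_Ioc_mul_one_add_add_mul_exp Λ LA ht hΛA hf] at this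
  linarith

theorem statement12_general
    {U A : Type*} [TopologicalSpace U] [MeasurableSpace U] [BorelSpace U]
    [TopologicalSpace A] [MeasurableSpace A] [BorelSpace A]
    (ν₀ : Measure U) [IsProbabilityMeasure ν₀]
    (μ : ℝ → Measure (U × A)) (hμprob : ∀ t, IsProbabilityMeasure (μ t))
    (ψU : U → ℝ) (ψA : A → ℝ) (hψUc : Continuous ψU) (hψAc : Continuous ψA)
    (hψU0 : ∀ u, 0 ≤ ψU u) (hψA0 : ∀ a, 0 ≤ ψA a)
    (Λ₁ LU LA ΛA : ℝ) (hΛ₁ : 0 < Λ₁) (hLU : 0 < LU) (hLA : 0 < LA) (hΛA : 0 < ΛA)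
    (φ : ℕ → BoundedContinuousFunction U ℝ)
    (hφmono : ∀ u, Monotone fun n => φ n u)
    (hφlim : ∀ u, Tendsto (fun n => φ n u) atTop (𝓝 (ψU u)))
    (g : ℕ → U × A × ℝ → ℝ)
    (hgbound : ∀ n u a t, 0 ≤ t → |g n (u, a, t)| ≤ Λ₁ * (1 + ψU u + ψA a))
    (ha : (∫⁻ u, ENNReal.ofReal (ψU u) ∂ν₀) ≤ ENNReal.ofReal LU)
    (hb : ∀ t : ℝ, 0 ≤ t →
      (∫⁻ a, ENNReal.ofReal (ψA a) ∂((μ t).map Prod.snd))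
        ≤ ENNReal.ofReal (LA * Real.exp (ΛA * t)))
    (hc_meas : Measurable fun t => ∫⁻ u, ENNReal.ofReal (ψU u) ∂((μ t).map Prod.fst))
    (hc_bdd : ∀ T : ℝ, 0 ≤ T → ∃ C : ℝ≥0∞, C < ⊤ ∧ ∀ t ∈ Set.Icc (0:ℝ) T,
      (∫⁻ u, ENNReal.ofReal (ψU u) ∂((μ t).map Prod.fst)) ≤ C)
    (hd : ∀ (n : ℕ) (t : ℝ), 0 ≤ t →
      (∫ u, φ n u ∂((μ t).map Prod.fst)) - (∫ u, φ n u ∂ν₀)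
        = ∫ s in Set.Ioc (0:ℝ) t, ∫ x : U × A, g n (x.1, x.2, s) ∂(μ s)) :
    ∀ t : ℝ, 0 ≤ t →
      (∫⁻ u, ENNReal.ofReal (ψU u) ∂((μ t).map Prod.fst))
        ≤ ENNReal.ofReal
            ((LU + Λ₁ * t + (Λ₁ * LA / ΛA) * (Real.exp (ΛA * t) - 1)) * Real.exp (Λ₁ * t)) := by
  intro t ht
  set f : ℝ → ℝ := fun s => ∫ u, ψU u ∂((μ s).map Prod.fst)
  have hf_toReal (s : ℝ) : f s = (∫⁻ u, ENNReal.ofReal (ψU u) ∂((μ s).map Prod.fst)).toReal :=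
    integral_eq_lintegral_of_nonneg_ae (ae_of_all _ hψU0) hψUc.aestronglyMeasurable
  have hψU (s : ℝ) (hs : 0 ≤ s) : Integrable ψU ((μ s).map Prod.fst) := by
    obtain ⟨C, hC, hle⟩ := hc_bdd s hs
    exact (lintegral_ofReal_ne_top_iff_integrable hψUc.aestronglyMeasurable
      (ae_of_all _ hψU0)).1 ((hle s ⟨hs, le_rfl⟩).trans_lt hC).ne
  have hψA (s : ℝ) (hs : 0 ≤ s) : Integrable ψA ((μ s).map Prod.snd) ∧
      ∫ a, ψA a ∂((μ s).map Prod.snd) ≤ LA * exp (ΛA * s) :=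
    integrable_and_integral_le_of_lintegral_ofReal_le
      (ae_of_all _ hψA0) hψAc.aestronglyMeasurable (by positivity) (hb s hs)
  obtain ⟨hψ₀, hψ₀_le⟩ := integrable_and_integral_le_of_lintegral_ofReal_le
    (ae_of_all _ hψU0) hψUc.aestronglyMeasurable hLU.le ha
  obtain ⟨C, hC, hle⟩ := hc_bdd t ht
  have hf : IntegrableOn f (Ioc 0 t) := by
    rw [funext hf_toReal]
    exact integrableOn_toReal_of_le measurableSet_Ioc measure_Ioc_lt_top.ne hc_meas hC.ne
      fun s hs => hle s (Ioc_subset_Icc_self hs)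
  have hfC (s : ℝ) (hs : s ∈ Icc 0 t) : f s ≤ C.toReal :=
    (hf_toReal s).trans_le (ENNReal.toReal_mono hC.ne (hle s hs))
  have hrec (s : ℝ) (hs : s ∈ Icc 0 t) : f s ≤ LU + Λ₁ * t
      + Λ₁ * LA / ΛA * (exp (ΛA * t) - 1) + Λ₁ * ∫ r in Ioc 0 s, f r := by
    refine (integral_map_fst_le_of_forward_equation hμprob hs.1 hΛ₁.le hΛA.ne' hφmono hφlim
      hgbound hψ₀ hψ₀_le hψU (fun s hs => (hψA s hs).1) (fun s hs => (hψA s hs).2)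
      (hf.mono_set (Ioc_subset_Ioc_right hs.2)) (fun n => hd n s hs.1)).trans ?_
    have := hs.2
    gcongr
  have hB : 0 ≤ LU + Λ₁ * t + Λ₁ * LA / ΛA * (exp (ΛA * t) - 1) := by
    have := one_le_exp (mul_nonneg hΛA.le ht)
    positivity
  rw [← ofReal_integral_eq_lintegral_ofReal (hψU t ht) (ae_of_all _ hψU0)]
  exact ENNReal.ofReal_le_ofReal (le_mul_exp_of_le_add_mul_integral ht hΛ₁.le hB hf hfC hrec)

/-- The quantitative Grönwall bound for solutions of the Kolmogorov forward
equation of a regular controlled martingale problem: under the growth bounds on `Aφ_n` (here the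
functions `g n`), on the initial distribution and on the action marginal, the `ψ_U`-moment of the
state marginal satisfies
`∫ ψ_U dμ_t^U ≤ (L_U + Λ₁ t + (Λ₁ L_A / Λ_A)(e^{Λ_A t} − 1)) e^{Λ₁ t}` for all `t ≥ 0`. -/
theorem statement12
    {U A : Type*} [TopologicalSpace U] [PolishSpace U] [MeasurableSpace U] [BorelSpace U]
    [TopologicalSpace A] [PolishSpace A] [MeasurableSpace A] [BorelSpace A]
    (ν₀ : Measure U) [IsProbabilityMeasure ν₀]
    (μ : ℝ → Measure (U × A)) (hμprob : ∀ t, IsProbabilityMeasure (μ t))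
    (hμmeas : ∀ g : BoundedContinuousFunction (U × A) ℝ,
      Measurable fun t => ∫ x, g x ∂(μ t))
    (ψU : U → ℝ) (ψA : A → ℝ) (hψUc : Continuous ψU) (hψAc : Continuous ψA)
    (hψU0 : ∀ u, 0 ≤ ψU u) (hψA0 : ∀ a, 0 ≤ ψA a)
    (Λ₁ LU LA ΛA : ℝ) (hΛ₁ : 0 < Λ₁) (hLU : 0 < LU) (hLA : 0 < LA) (hΛA : 0 < ΛA)
    (φ : ℕ → BoundedContinuousFunction U ℝ)
    (hφ0 : ∀ n u, 0 ≤ φ n u)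
    (hφmono : ∀ u, Monotone fun n => φ n u)
    (hφlim : ∀ u, Tendsto (fun n => φ n u) atTop (𝓝 (ψU u)))
    (g : ℕ → U × A × ℝ → ℝ) (hgcont : ∀ n, Continuous (g n))
    (hgbound : ∀ n u a t, 0 ≤ t → |g n (u, a, t)| ≤ Λ₁ * (1 + ψU u + ψA a))
    (ha : (∫⁻ u, ENNReal.ofReal (ψU u) ∂ν₀) ≤ ENNReal.ofReal LU)
    (hb : ∀ t : ℝ, 0 ≤ t →
      (∫⁻ a, ENNReal.ofReal (ψA a) ∂((μ t).map Prod.snd))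
        ≤ ENNReal.ofReal (LA * Real.exp (ΛA * t)))
    (hc_fin : ∀ t : ℝ, 0 ≤ t →
      (∫⁻ u, ENNReal.ofReal (ψU u) ∂((μ t).map Prod.fst)) < ⊤)
    (hc_meas : Measurable fun t => ∫⁻ u, ENNReal.ofReal (ψU u) ∂((μ t).map Prod.fst))
    (hc_bdd : ∀ T : ℝ, 0 ≤ T → ∃ C : ℝ≥0∞, C < ⊤ ∧ ∀ t ∈ Set.Icc (0:ℝ) T,
      (∫⁻ u, ENNReal.ofReal (ψU u) ∂((μ t).map Prod.fst)) ≤ C)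
    (hd : ∀ (n : ℕ) (t : ℝ), 0 ≤ t →
      (∫ u, φ n u ∂((μ t).map Prod.fst)) - (∫ u, φ n u ∂ν₀)
        = ∫ s in Set.Ioc (0:ℝ) t, ∫ x : U × A, g n (x.1, x.2, s) ∂(μ s)) :
    ∀ t : ℝ, 0 ≤ t →
      (∫⁻ u, ENNReal.ofReal (ψU u) ∂((μ t).map Prod.fst))
        ≤ ENNReal.ofReal
            ((LU + Λ₁ * t + (Λ₁ * LA / ΛA) * (Real.exp (ΛA * t) - 1)) * Real.exp (Λ₁ * t)) :=
  statement12_general ν₀ μ hμprob ψU ψA hψUc hψAc hψU0 hψA0 Λ₁ LU LA ΛA hΛ₁ hLU hLA hΛA φ hφmono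
    hφlim g hgbound ha hb hc_meas hc_bdd hd
end

section
/- Let U and A be Polish spaces and let t ↦ μ_t be a measurable map from [0,∞) to the Borel probability measures on U × A, with U-marginal μ_t^U. Let ψ_U : U → [0,∞) and ψ_A : A → [0,∞) be continuous, let β₁ > 1 and L₁, L_ψ, Λ_ψ > 0, and let ψ : U × A × [0,∞) → [1,∞) be continuous with ψ(u,a,r)^{β₁} ≤ L₁(1 + ψ_U(u) + ψ_A(a)) for all (u,a,r). Assume ∫ (1 + ψ_U(u) + ψ_A(a)) μ_r(du × da) ≤ L_ψ e^{Λ_ψ r} for all r ≥ 0. Let f ∈ C_b(U), a_f ≥ 0, and let h be a continuous function on U × A × [0,∞) with |h(u,a,r)| ≤ a_f ψ(u,a,r), and suppose ∫ f dμ_t^U − ∫ f dμ_s^U = ∫_s^t ∫_{U×A} h(u,a,r) μ_r(du × da) dr for all 0 ≤ s ≤ t. Then for all 0 ≤ s ≤ t: | ∫ f dμ_t^U − ∫ f dμ_s^U | ≤ a_f (t − s)^{1 − 1/β₁} ( L₁ L_ψ (e^{Λ_ψ t} − e^{Λ_ψ s}) / Λ_ψ )^{1/β₁}. -/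
open MeasureTheory Set Real
open scoped ENNReal

/-!
Pointwise in time, `|h| ≤ a_f ψ` and Hölder's inequality for the probability measure `μ_r`
give `|∫ h(·, r) dμ_r| ≤ a_f (∫ ψ^β₁ dμ_r)^(1/β₁) ≤ a_f (L₁ L_ψ e^{Λ_ψ r})^(1/β₁)`.
Integrating over `(s, t]` and applying Hölder once more, now in time with the exponents `β₁`
and its conjugate, bounds `∫_s^t (L₁ L_ψ e^{Λ_ψ r})^(1/β₁) dr` by `(t - s)^(1 - 1/β₁)` times
`(∫_s^t L₁ L_ψ e^{Λ_ψ r} dr)^(1/β₁)`, and the last integral is explicit.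
-/

section Holder

variable {α : Type*} [MeasurableSpace α] {ν : Measure α}

theorem lintegral_le_lintegral_rpow_mul_measure_univ {g : α → ℝ≥0∞} (hg : AEMeasurable g ν)
    {p : ℝ} (hp : 1 < p) :
    ∫⁻ x, g x ∂ν ≤ (∫⁻ x, g x ^ p ∂ν) ^ (1 / p) * ν univ ^ (1 - 1 / p) := by
  have hpq := Real.HolderConjugate.conjExponent hp
  simpa [one_div, hpq.one_sub_inv, lintegral_const] using
    ENNReal.lintegral_mul_le_Lp_mul_Lq ν hpq hg (aemeasurable_const (b := (1 : ℝ≥0∞)))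

theorem integrable_and_integral_le_of_lintegral_rpow_le [IsFiniteMeasure ν] {g : α → ℝ}
    {p C : ℝ} (hp : 1 < p) (hC : 0 ≤ C) (hg : AEStronglyMeasurable g ν) (hg0 : 0 ≤ᵐ[ν] g)
    (hgp : ∫⁻ x, ENNReal.ofReal (g x ^ p) ∂ν ≤ ENNReal.ofReal C) :
    Integrable g ν ∧ ∫ x, g x ∂ν ≤ C ^ (1 / p) * ν.real univ ^ (1 - 1 / p) := by
  have hp0 : 0 ≤ p := by linarith
  have hle : ∫⁻ x, ENNReal.ofReal (g x) ∂ν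
      ≤ ENNReal.ofReal (C ^ (1 / p) * ν.real univ ^ (1 - 1 / p)) :=
    calc ∫⁻ x, ENNReal.ofReal (g x) ∂ν
        ≤ (∫⁻ x, ENNReal.ofReal (g x) ^ p ∂ν) ^ (1 / p) * ν univ ^ (1 - 1 / p) :=
          lintegral_le_lintegral_rpow_mul_measure_univ hg.aemeasurable.ennreal_ofReal hp
      _ = (∫⁻ x, ENNReal.ofReal (g x ^ p) ∂ν) ^ (1 / p)
            * ENNReal.ofReal (ν.real univ) ^ (1 - 1 / p) := by
          rw [ofReal_measureReal]
          congr 2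
          exact lintegral_congr_ae (hg0.mono fun x hx => ENNReal.ofReal_rpow_of_nonneg hx hp0)
      _ ≤ ENNReal.ofReal C ^ (1 / p) * ENNReal.ofReal (ν.real univ) ^ (1 - 1 / p) := by
          gcongr
      _ = ENNReal.ofReal (C ^ (1 / p) * ν.real univ ^ (1 - 1 / p)) := by
          have : 0 ≤ 1 - 1 / p := by rw [sub_nonneg, div_le_one (by linarith)]; exact hp.le
          rw [ENNReal.ofReal_rpow_of_nonneg hC (by positivity),
            ENNReal.ofReal_rpow_of_nonneg measureReal_nonneg this,
            ENNReal.ofReal_mul (by positivity)]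
  refine ⟨⟨hg, (hasFiniteIntegral_iff_ofReal hg0).2 (hle.trans_lt ENNReal.ofReal_lt_top)⟩, ?_⟩
  rw [integral_eq_lintegral_of_nonneg_ae hg0 hg]
  exact ENNReal.toReal_le_of_le_ofReal (by positivity) hle

theorem integral_rpow_one_div_le [IsFiniteMeasure ν] {φ : α → ℝ} {p : ℝ} (hp : 1 < p)
    (hφ : Integrable φ ν) (hφ0 : 0 ≤ᵐ[ν] φ) :
    ∫ x, φ x ^ (1 / p) ∂ν ≤ (∫ x, φ x ∂ν) ^ (1 / p) * ν.real univ ^ (1 - 1 / p) := by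
  refine (integrable_and_integral_le_of_lintegral_rpow_le hp (integral_nonneg_of_ae hφ0)
    (hφ.aestronglyMeasurable.aemeasurable.pow_const _).aestronglyMeasurable
    (hφ0.mono fun x hx => Real.rpow_nonneg hx _) (le_of_eq ?_)).2
  rw [ofReal_integral_eq_lintegral_ofReal hφ hφ0]
  refine lintegral_congr_ae (hφ0.mono fun x hx => ?_)
  dsimp only
  rw [one_div, Real.rpow_inv_rpow hx (by linarith)]

theorem abs_integral_le_of_abs_le_mul_of_rpow_le [IsProbabilityMeasure ν] {h ψ w : α → ℝ}
    {a β L M : ℝ} (hβ : 1 < β) (ha : 0 ≤ a) (hL : 0 ≤ L) (hM : 0 ≤ M)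
    (hψ : AEStronglyMeasurable ψ ν) (hψ0 : 0 ≤ᵐ[ν] ψ) (hhψ : ∀ᵐ x ∂ν, |h x| ≤ a * ψ x)
    (hψw : ∀ᵐ x ∂ν, ψ x ^ β ≤ L * w x)
    (hw : ∫⁻ x, ENNReal.ofReal (w x) ∂ν ≤ ENNReal.ofReal M) :
    |∫ x, h x ∂ν| ≤ a * (L * M) ^ (1 / β) := by
  have hψβ : ∫⁻ x, ENNReal.ofReal (ψ x ^ β) ∂ν ≤ ENNReal.ofReal (L * M) :=
    calc ∫⁻ x, ENNReal.ofReal (ψ x ^ β) ∂ν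
        ≤ ∫⁻ x, ENNReal.ofReal L * ENNReal.ofReal (w x) ∂ν :=
          lintegral_mono_ae (hψw.mono fun x hx => by
            rw [← ENNReal.ofReal_mul hL]; exact ENNReal.ofReal_le_ofReal hx)
      _ = ENNReal.ofReal L * ∫⁻ x, ENNReal.ofReal (w x) ∂ν :=
          lintegral_const_mul' _ _ ENNReal.ofReal_ne_top
      _ ≤ ENNReal.ofReal L * ENNReal.ofReal M := by gcongr
      _ = ENNReal.ofReal (L * M) := (ENNReal.ofReal_mul hL).symm
  obtain ⟨hψi, hψle⟩ :=
    integrable_and_integral_le_of_lintegral_rpow_le hβ (mul_nonneg hL hM) hψ hψ0 hψβ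
  rw [probReal_univ, Real.one_rpow, mul_one] at hψle
  calc |∫ x, h x ∂ν| ≤ ∫ x, a * ψ x ∂ν := by
        rw [← Real.norm_eq_abs]; exact norm_integral_le_of_norm_le (hψi.const_mul a) hhψ
    _ = a * ∫ x, ψ x ∂ν := integral_const_mul a _
    _ ≤ a * (L * M) ^ (1 / β) := by gcongr

end Holder

theorem integral_Ioc_exp_mul {Λ s t : ℝ} (hΛ : Λ ≠ 0) (hst : s ≤ t) :
    ∫ r in Ioc s t, exp (Λ * r) = (exp (Λ * t) - exp (Λ * s)) / Λ := by
  rw [← intervalIntegral.integral_of_le hst,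
    intervalIntegral.integral_comp_mul_left (fun x => exp x) hΛ, integral_exp, smul_eq_mul]
  ring

theorem statement13_general
    {U A : Type*} [TopologicalSpace U] [MeasurableSpace U] [BorelSpace U]
    [TopologicalSpace A] [PolishSpace A] [MeasurableSpace A] [BorelSpace A]
    (μ : ℝ → Measure (U × A)) (hμprob : ∀ t, IsProbabilityMeasure (μ t))
    (ψU : U → ℝ) (ψA : A → ℝ)
    (β₁ L₁ Lψ Λψ : ℝ) (hβ₁ : 1 < β₁) (hL₁ : 0 < L₁) (hLψ : 0 < Lψ) (hΛψ : 0 < Λψ)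
    (ψ : U × A × ℝ → ℝ) (hψc : Continuous ψ) (hψ1 : ∀ x, 1 ≤ ψ x)
    (hψβ : ∀ (u : U) (a : A) (r : ℝ), 0 ≤ r →
      ψ (u, a, r) ^ β₁ ≤ L₁ * (1 + ψU u + ψA a))
    (hmom : ∀ r : ℝ, 0 ≤ r →
      (∫⁻ x : U × A, ENNReal.ofReal (1 + ψU x.1 + ψA x.2) ∂(μ r))
        ≤ ENNReal.ofReal (Lψ * Real.exp (Λψ * r)))
    (f : BoundedContinuousFunction U ℝ) (af : ℝ) (haf : 0 ≤ af)
    (h : U × A × ℝ → ℝ)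
    (hhb : ∀ (u : U) (a : A) (r : ℝ), 0 ≤ r → |h (u, a, r)| ≤ af * ψ (u, a, r))
    (hfe : ∀ s t : ℝ, 0 ≤ s → s ≤ t →
      (∫ u, f u ∂((μ t).map Prod.fst)) - (∫ u, f u ∂((μ s).map Prod.fst))
        = ∫ r in Set.Ioc s t, ∫ x : U × A, h (x.1, x.2, r) ∂(μ r)) :
    ∀ s t : ℝ, 0 ≤ s → s ≤ t →
      |(∫ u, f u ∂((μ t).map Prod.fst)) - (∫ u, f u ∂((μ s).map Prod.fst))|
        ≤ af * (t - s) ^ (1 - 1 / β₁)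
            * (L₁ * Lψ * (Real.exp (Λψ * t) - Real.exp (Λψ * s)) / Λψ) ^ (1 / β₁) := by
  intro s t hs hst
  have hbound : ∀ r ∈ Ioc s t, |∫ x : U × A, h (x.1, x.2, r) ∂(μ r)|
      ≤ af * (L₁ * Lψ * exp (Λψ * r)) ^ (1 / β₁) := by
    intro r hr
    have hr0 : 0 ≤ r := hs.trans hr.1.le
    have := hμprob r
    rw [mul_assoc L₁]
    exact abs_integral_le_of_abs_le_mul_of_rpow_le hβ₁ haf hL₁.le (by positivity)
      (hψc.comp (by fun_prop)).aestronglyMeasurable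
      (ae_of_all _ fun x => zero_le_one.trans (hψ1 _))
      (ae_of_all _ fun x => hhb x.1 x.2 r hr0) (ae_of_all _ fun x => hψβ x.1 x.2 r hr0)
      (hmom r hr0)
  have hexp : Integrable (fun r => L₁ * Lψ * exp (Λψ * r)) (volume.restrict (Ioc s t)) :=
    (by fun_prop : Continuous fun r => L₁ * Lψ * exp (Λψ * r)).integrableOn_Ioc
  have hrpow : Continuous fun r => (L₁ * Lψ * exp (Λψ * r)) ^ (1 / β₁) :=
    (by fun_prop : Continuous fun r => L₁ * Lψ * exp (Λψ * r)).rpow_const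
      fun _ => Or.inr (by positivity)
  rw [hfe s t hs hst]
  calc |∫ r in Ioc s t, ∫ x : U × A, h (x.1, x.2, r) ∂(μ r)|
      ≤ ∫ r in Ioc s t, af * (L₁ * Lψ * exp (Λψ * r)) ^ (1 / β₁) := by
        rw [← Real.norm_eq_abs]
        exact norm_integral_le_of_norm_le ((hrpow.const_mul af).integrableOn_Ioc)
          ((ae_restrict_iff' measurableSet_Ioc).2 (ae_of_all _ hbound))
    _ = af * ∫ r in Ioc s t, (L₁ * Lψ * exp (Λψ * r)) ^ (1 / β₁) := integral_const_mul _ _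
    _ ≤ af * ((∫ r in Ioc s t, L₁ * Lψ * exp (Λψ * r)) ^ (1 / β₁) * (t - s) ^ (1 - 1 / β₁)) := by
        gcongr
        simpa [Real.volume_real_Ioc_of_le hst] using
          integral_rpow_one_div_le hβ₁ hexp (ae_of_all _ fun r => by positivity)
    _ = af * (t - s) ^ (1 - 1 / β₁)
          * (L₁ * Lψ * (exp (Λψ * t) - exp (Λψ * s)) / Λψ) ^ (1 / β₁) := by
        rw [integral_const_mul, integral_Ioc_exp_mul hΛψ.ne' hst, mul_div_assoc]
        ring

/-- The equicontinuity estimate for solutions of the Kolmogorov forward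
equation of a regular controlled martingale problem: if `|h| ≤ a_f ψ`, `ψ ≥ 1`,
`ψ^{β₁} ≤ L₁ (1 + ψ_U + ψ_A)`, and the `(1 + ψ_U + ψ_A)`-moments of `μ_r` grow at most like
`L_ψ e^{Λ_ψ r}`, then the forward-equation identity for `f` implies
`|∫ f dμ_t^U − ∫ f dμ_s^U| ≤ a_f (t−s)^{1−1/β₁} (L₁ L_ψ (e^{Λ_ψ t} − e^{Λ_ψ s})/Λ_ψ)^{1/β₁}`. -/
theorem statement13
    {U A : Type*} [TopologicalSpace U] [PolishSpace U] [MeasurableSpace U] [BorelSpace U]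
    [TopologicalSpace A] [PolishSpace A] [MeasurableSpace A] [BorelSpace A]
    (μ : ℝ → Measure (U × A)) (hμprob : ∀ t, IsProbabilityMeasure (μ t))
    (hμmeas : ∀ g : BoundedContinuousFunction (U × A) ℝ,
      Measurable fun t => ∫ x, g x ∂(μ t))
    (ψU : U → ℝ) (ψA : A → ℝ) (hψUc : Continuous ψU) (hψAc : Continuous ψA)
    (hψU0 : ∀ u, 0 ≤ ψU u) (hψA0 : ∀ a, 0 ≤ ψA a)
    (β₁ L₁ Lψ Λψ : ℝ) (hβ₁ : 1 < β₁) (hL₁ : 0 < L₁) (hLψ : 0 < Lψ) (hΛψ : 0 < Λψ)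
    (ψ : U × A × ℝ → ℝ) (hψc : Continuous ψ) (hψ1 : ∀ x, 1 ≤ ψ x)
    (hψβ : ∀ (u : U) (a : A) (r : ℝ), 0 ≤ r →
      ψ (u, a, r) ^ β₁ ≤ L₁ * (1 + ψU u + ψA a))
    (hmom : ∀ r : ℝ, 0 ≤ r →
      (∫⁻ x : U × A, ENNReal.ofReal (1 + ψU x.1 + ψA x.2) ∂(μ r))
        ≤ ENNReal.ofReal (Lψ * Real.exp (Λψ * r)))
    (f : BoundedContinuousFunction U ℝ) (af : ℝ) (haf : 0 ≤ af)
    (h : U × A × ℝ → ℝ) (hhc : Continuous h)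
    (hhb : ∀ (u : U) (a : A) (r : ℝ), 0 ≤ r → |h (u, a, r)| ≤ af * ψ (u, a, r))
    (hfe : ∀ s t : ℝ, 0 ≤ s → s ≤ t →
      (∫ u, f u ∂((μ t).map Prod.fst)) - (∫ u, f u ∂((μ s).map Prod.fst))
        = ∫ r in Set.Ioc s t, ∫ x : U × A, h (x.1, x.2, r) ∂(μ r)) :
    ∀ s t : ℝ, 0 ≤ s → s ≤ t →
      |(∫ u, f u ∂((μ t).map Prod.fst)) - (∫ u, f u ∂((μ s).map Prod.fst))|
        ≤ af * (t - s) ^ (1 - 1 / β₁)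
            * (L₁ * Lψ * (Real.exp (Λψ * t) - Real.exp (Λψ * s)) / Λψ) ^ (1 / β₁) :=
  statement13_general μ hμprob ψU ψA β₁ L₁ Lψ Λψ hβ₁ hL₁ hLψ hΛψ ψ hψc hψ1 hψβ hmom f af haf h hhb
    hfe
end

section
/- Let S and A be Polish spaces, let (Ω,Σ,(F_t)_{t≥0},P) be a filtered probability space, let (s_t)_{t≥0} be a càdlàg (F_t)-adapted S-valued process with law(s_0) = υ, and let (π_t)_{t≥0} be a progressively measurable process with values in the Borel probability measures on A. Let f ∈ C_b(S) and let h : S × A × [0,∞) → ℝ be continuous with E[ ∫₀^t ∫_A |h(s_r, a, r)| π_r(da) dr ] < ∞ for all t ≥ 0. Suppose the process m_t := f(s_t) − f(s_0) − ∫₀^t ∫_A h(s_r, a, r) π_r(da) dr is an (F_t)-martingale. For each t ≥ 0 define the Borel probability measure μ_t on S × A by ∫ g dμ_t = E[ ∫_A g(s_t, a) π_t(da) ] for all bounded continuous g on S × A, and let μ_t^S denote its S-marginal. Then for all t ≥ 0: ∫_S f dμ_t^S − ∫_S f dυ = ∫₀^t ∫_{S×A} h(s, a, r) μ_r(ds ×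 da) dr. -/
/-!
Taking expectations in the martingale identity gives
`E f(s_t) - E f(s_0) = E ∫₀ᵗ ∫_A h(s_r, a, r) π_r(da) dr`, and the order of `E` and `∫₀ᵗ` is then
exchanged by Fubini. The joint measurability this needs comes from two approximations: a
right-continuous process is the pointwise limit of the same process read at the next dyadic
time, and a weakly measurable family of probability measures is a kernel, since bounded
continuous functions decrease to indicators of closed sets. Finally, testing `μ_r` against bounded
continuous functions determines it as the image of `P ⊗ π_r` under `(ω, a) ↦ (s_r ω, a)`, which
identifies `E ∫_A h(s_r, a, r) π_r(da)` with `∫ h(·, ·, r) dμ_r` also for unbounded `h`.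
-/

open MeasureTheory Filter ProbabilityTheory TopologicalSpace
open scoped Topology ENNReal

noncomputable def nextDyadic (n : ℕ) (v : ℝ) : ℝ := (⌊v * 2 ^ n⌋ + 1) / 2 ^ n

theorem lt_nextDyadic (n : ℕ) (v : ℝ) : v < nextDyadic n v := by
  rw [nextDyadic, lt_div_iff₀ (by positivity)]
  exact Int.lt_floor_add_one _

theorem nextDyadic_le (n : ℕ) (v : ℝ) : nextDyadic n v ≤ v + (2 ^ n)⁻¹ := by
  rw [nextDyadic, div_le_iff₀ (by positivity), add_mul, inv_mul_cancel₀ (by positivity)]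
  gcongr
  exact Int.floor_le _

theorem tendsto_nextDyadic (v : ℝ) : Tendsto (fun n => nextDyadic n v) atTop (𝓝[≥] v) := by
  refine tendsto_nhdsWithin_iff.2 ⟨?_, .of_forall fun n => (lt_nextDyadic n v).le⟩
  have hlim : Tendsto (fun n : ℕ => v + (2 ^ n : ℝ)⁻¹) atTop (𝓝 v) := by
    simpa using tendsto_const_nhds.add
      (tendsto_inv_atTop_zero.comp (tendsto_pow_atTop_atTop_of_one_lt (one_lt_two (α := ℝ))))
  exact tendsto_of_tendsto_of_tendsto_of_le_of_le tendsto_const_nhds hlim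
    (fun n => (lt_nextDyadic n v).le) (nextDyadic_le · v)

theorem measurable_comp_of_continuousWithinAt_Ici {X Ω S : Type*} [MeasurableSpace X]
    [MeasurableSpace Ω] [TopologicalSpace S] [PseudoMetrizableSpace S] [MeasurableSpace S]
    [BorelSpace S] {s : ℝ → Ω → S} (hs : ∀ t, 0 ≤ t → Measurable (s t))
    (hright : ∀ ω t, 0 ≤ t → ContinuousWithinAt (fun r => s r ω) (Set.Ici t) t)
    {τ : X → ℝ} (hτ : Measurable τ) (hτ0 : ∀ x, 0 ≤ τ x) :
    Measurable fun p : X × Ω => s (τ p.1) p.2 := by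
  have happrox : ∀ n, Measurable fun p : X × Ω => s (max 0 (nextDyadic n (τ p.1))) p.2 := by
    intro n
    have hgrid : Measurable fun q : Ω × ℤ => s (max 0 ((q.2 + 1) / 2 ^ n)) q.1 :=
      measurable_from_prod_countable_left fun k => hs (max 0 ((k + 1) / 2 ^ n)) (le_max_left _ _)
    exact hgrid.comp (measurable_snd.prodMk ((hτ.comp measurable_fst).mul_const _).floor)
  refine measurable_of_tendsto_metrizable happrox (tendsto_pi_nhds.2 fun p => ?_)
  have hpos : ∀ n, max 0 (nextDyadic n (τ p.1)) = nextDyadic n (τ p.1) := fun n =>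
    max_eq_right ((hτ0 p.1).trans (lt_nextDyadic n _).le)
  simp only [hpos]
  exact (hright p.2 _ (hτ0 p.1)).tendsto.comp (tendsto_nextDyadic _)

theorem measurable_of_forall_measurable_integral {X A : Type*} [MeasurableSpace X]
    [TopologicalSpace A] [MeasurableSpace A] [BorelSpace A] [HasOuterApproxClosed A]
    {κ : X → Measure A} [∀ x, IsProbabilityMeasure (κ x)]
    (hκ : ∀ g : BoundedContinuousFunction A ℝ, Measurable fun x => ∫ a, g a ∂κ x) :
    Measurable κ := by
  refine .measure_of_isPiSystem_of_isProbabilityMeasure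
    (BorelSpace.measurable_eq.trans borel_eq_generateFrom_isClosed) isPiSystem_isClosed
    fun F hF => measurable_of_tendsto_metrizable (fun n => ?_)
      (tendsto_pi_nhds.2 fun x => HasOuterApproxClosed.tendsto_lintegral_apprSeq hF (κ x))
  have hg := hκ ⟨⟨fun a => (hF.apprSeq n a : ℝ), by fun_prop⟩, (hF.apprSeq n).map_bounded'⟩
  simp_rw [lintegral_coe_eq_integral _ (BoundedContinuousFunction.integrable_of_nnreal _ _)]
  exact hg.ennreal_ofReal

theorem integrable_integral_kernel_of_lintegral_lt_top {X A : Type*} [MeasurableSpace X]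
    [MeasurableSpace A] {ρ : Measure X} {κ : Kernel X A} [IsSFiniteKernel κ]
    {G : X × A → ℝ} (hG : Measurable G) (hfin : ∫⁻ x, ∫⁻ a, ‖G (x, a)‖ₑ ∂κ x ∂ρ < ∞) :
    Integrable (fun x => ∫ a, G (x, a) ∂κ x) ρ :=
  ⟨hG.stronglyMeasurable.integral_kernel_prod_right'.aestronglyMeasurable,
    (lintegral_mono fun _ => enorm_integral_le_lintegral_enorm _).trans_lt hfin⟩

def IsJointLaw {Ω S A : Type*} [MeasurableSpace Ω] [TopologicalSpace S] [MeasurableSpace S]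
    [TopologicalSpace A] [MeasurableSpace A] (ν : Measure (S × A)) (P : Measure Ω)
    (X : Ω → S) (κ : Ω → Measure A) : Prop :=
  ∀ g : BoundedContinuousFunction (S × A) ℝ, ∫ x, g x ∂ν = ∫ ω, ∫ a, g (X ω, a) ∂κ ω ∂P

namespace IsJointLaw

variable {Ω S A : Type*} [MeasurableSpace Ω] [TopologicalSpace S] [MeasurableSpace S]
  [TopologicalSpace A] [MeasurableSpace A] {ν : Measure (S × A)} {P : Measure Ω}
  {X : Ω → S}

theorem integral_map_fst [OpensMeasurableSpace S] {κ : Ω → Measure A}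
    [∀ ω, IsProbabilityMeasure (κ ω)] (hν : IsJointLaw ν P X κ)
    (f : BoundedContinuousFunction S ℝ) :
    ∫ x, f x ∂(ν.map Prod.fst) = ∫ ω, f (X ω) ∂P := by
  rw [integral_map measurable_fst.aemeasurable f.continuous.aestronglyMeasurable]
  simpa using hν (f.compContinuous ⟨Prod.fst, continuous_fst⟩)

variable [PseudoMetrizableSpace S] [BorelSpace S] [PseudoMetrizableSpace A]
  [SecondCountableTopology A] [BorelSpace A] [IsFiniteMeasure P] {κ : Kernel Ω A}
  [IsMarkovKernel κ]

theorem eq_map_compProd [IsFiniteMeasure ν] (hν : IsJointLaw ν P X κ) (hX : Measurable X) :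
    ν = (P ⊗ₘ κ).map fun p => (X p.1, p.2) := by
  have hXmap : Measurable fun p : Ω × A => (X p.1, p.2) := by fun_prop
  refine ext_of_forall_integral_eq_of_IsFiniteMeasure fun g => ?_
  rw [hν, integral_map hXmap.aemeasurable g.continuous.aestronglyMeasurable,
    Measure.integral_compProd (f := fun p : Ω × A => g (X p.1, p.2))
      (g.integrable _ |>.comp_measurable hXmap)]

theorem integral_eq [IsFiniteMeasure ν] (hν : IsJointLaw ν P X κ) (hX : Measurable X)
    {F : S × A → ℝ} (hF : Measurable F) (hfin : ∫⁻ ω, ∫⁻ a, ‖F (X ω, a)‖ₑ ∂κ ω ∂P < ∞) :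
    ∫ x, F x ∂ν = ∫ ω, ∫ a, F (X ω, a) ∂κ ω ∂P := by
  have hXmap : Measurable fun p : Ω × A => (X p.1, p.2) := by fun_prop
  have hint : Integrable (fun p : Ω × A => F (X p.1, p.2)) (P ⊗ₘ κ) := by
    refine ⟨(hF.comp hXmap).aestronglyMeasurable, ?_⟩
    rwa [HasFiniteIntegral,
      Measure.lintegral_compProd (f := fun p : Ω × A => ‖F (X p.1, p.2)‖ₑ) (by fun_prop)]
  rw [hν.eq_map_compProd hX, integral_map hXmap.aemeasurable hF.aestronglyMeasurable,
    Measure.integral_compProd hint]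

end IsJointLaw

theorem integral_integral_kernel_eq_of_isJointLaw {Ω S A T : Type*} [MeasurableSpace Ω]
    [TopologicalSpace S] [PseudoMetrizableSpace S] [MeasurableSpace S] [BorelSpace S]
    [TopologicalSpace A] [PseudoMetrizableSpace A] [SecondCountableTopology A]
    [MeasurableSpace A] [BorelSpace A] [MeasurableSpace T]
    {P : Measure Ω} [IsFiniteMeasure P] {ρ : Measure T} [SFinite ρ]
    {η : Kernel (T × Ω) A} [IsMarkovKernel η] {σ : T × Ω → S} (hσ : Measurable σ)
    {μ : T → Measure (S × A)} [∀ r, IsFiniteMeasure (μ r)]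
    (hμ : ∀ᵐ r ∂ρ, IsJointLaw (μ r) P (fun ω => σ (r, ω)) (fun ω => η (r, ω)))
    {h : S × A × T → ℝ} (hh : Measurable h)
    (hfin : ∫⁻ ω, ∫⁻ r, ∫⁻ a, ‖h (σ (r, ω), a, r)‖ₑ ∂η (r, ω) ∂ρ ∂P < ∞) :
    ∫ ω, ∫ r, ∫ a, h (σ (r, ω), a, r) ∂η (r, ω) ∂ρ ∂P
      = ∫ r, ∫ x, h (x.1, x.2, r) ∂μ r ∂ρ := by
  set G : (T × Ω) × A → ℝ := fun q => h (σ q.1, q.2, q.1.1)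
  have hG : Measurable G := by fun_prop
  have hGnorm : Measurable fun p => ∫⁻ a, ‖G (p, a)‖ₑ ∂η p :=
    hG.enorm.lintegral_kernel_prod_right'
  have hfin' : ∫⁻ p, ∫⁻ a, ‖G (p, a)‖ₑ ∂η p ∂(ρ.prod P) < ∞ := by
    rwa [lintegral_prod_symm _ hGnorm.aemeasurable]
  have hslice : ∀ᵐ r ∂ρ, ∫⁻ ω, ∫⁻ a, ‖G ((r, ω), a)‖ₑ ∂η (r, ω) ∂P < ∞ :=
    ae_lt_top hGnorm.lintegral_prod_right'
      ((lintegral_prod (μ := ρ) (ν := P) _ hGnorm.aemeasurable) ▸ hfin'.ne)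
  rw [← integral_integral_swap (integrable_integral_kernel_of_lintegral_lt_top hG hfin')]
  refine integral_congr_ae ?_
  filter_upwards [hμ, hslice] with r hr hfr
  exact (hr.integral_eq (κ := η.comap (Prod.mk r) measurable_prodMk_left)
    (F := fun x => h (x.1, x.2, r)) (hσ.comp measurable_prodMk_left) (by fun_prop) hfr).symm

theorem integral_setIntegral_Ioc_eq_of_isJointLaw {Ω S A : Type*} [MeasurableSpace Ω]
    [TopologicalSpace S] [PseudoMetrizableSpace S] [MeasurableSpace S] [BorelSpace S]
    [TopologicalSpace A] [PseudoMetrizableSpace A] [SecondCountableTopology A]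
    [MeasurableSpace A] [BorelSpace A] {P : Measure Ω} [IsFiniteMeasure P]
    {s : ℝ → Ω → S} (hs : ∀ r, 0 ≤ r → Measurable (s r))
    (hright : ∀ ω r, 0 ≤ r → ContinuousWithinAt (fun u => s u ω) (Set.Ici r) r)
    {π : ℝ → Ω → Measure A} [∀ r ω, IsProbabilityMeasure (π r ω)] {t : ℝ} (ht : 0 ≤ t)
    (hπ : ∀ g : BoundedContinuousFunction A ℝ,
      Measurable fun q : Set.Icc (0:ℝ) t × Ω => ∫ a, g a ∂π q.1 q.2)
    {μ : ℝ → Measure (S × A)} [∀ r, IsFiniteMeasure (μ r)]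
    (hμ : ∀ r ∈ Set.Ioc 0 t, IsJointLaw (μ r) P (s r) (π r))
    {h : S × A × ℝ → ℝ} (hh : Measurable h)
    (hfin : ∫⁻ ω, (∫⁻ r in Set.Ioc (0:ℝ) t, ∫⁻ a, ‖h (s r ω, a, r)‖ₑ ∂π r ω) ∂P < ∞) :
    ∫ ω, (∫ r in Set.Ioc (0:ℝ) t, ∫ a, h (s r ω, a, r) ∂π r ω) ∂P
      = ∫ r in Set.Ioc (0:ℝ) t, ∫ x, h (x.1, x.2, r) ∂μ r := by
  let T : ℝ → ℝ := fun r => Set.projIcc 0 t ht r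
  have hT : Measurable T := (continuous_subtype_val.comp continuous_projIcc).measurable
  have hT_of_mem {r : ℝ} (hr : r ∈ Set.Ioc 0 t) : T r = r :=
    congrArg Subtype.val (Set.projIcc_of_mem ht (Set.Ioc_subset_Icc_self hr))
  -- freezing `π` outside `[0, t]` makes it jointly measurable in `(r, ω)`
  let η : Kernel (ℝ × Ω) A :=
    ⟨fun p => π (T p.1) p.2, measurable_of_forall_measurable_integral fun g =>
      (hπ g).comp (((continuous_projIcc (h := ht)).measurable.comp measurable_fst).prodMk
        measurable_snd)⟩
  have : IsMarkovKernel η := ⟨fun _ => inferInstance⟩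
  have hσ : Measurable fun p : ℝ × Ω => s (T p.1) p.2 :=
    measurable_comp_of_continuousWithinAt_Ici hs hright hT fun r => (Set.projIcc 0 t ht r).2.1
  have hμ' : ∀ᵐ r ∂volume.restrict (Set.Ioc 0 t),
      IsJointLaw (μ r) P (fun ω => s (T r) ω) (fun ω => η (r, ω)) := by
    refine ae_restrict_of_forall_mem measurableSet_Ioc fun r hr => ?_
    show IsJointLaw (μ r) P (s (T r)) (π (T r))
    rw [hT_of_mem hr]
    exact hμ r hr
  have hfin' :
      ∫⁻ ω, (∫⁻ r in Set.Ioc (0:ℝ) t, ∫⁻ a, ‖h (s (T r) ω, a, r)‖ₑ ∂η (r, ω)) ∂P < ∞ := by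
    refine lt_of_eq_of_lt (lintegral_congr fun ω => setLIntegral_congr_fun measurableSet_Ioc
      fun r hr => ?_) hfin
    simp [η, hT_of_mem hr]
  rw [← integral_integral_kernel_eq_of_isJointLaw hσ hμ' hh hfin']
  refine integral_congr_ae (.of_forall fun ω => setIntegral_congr_fun measurableSet_Ioc
    fun r hr => ?_)
  simp [η, hT_of_mem hr]

theorem statement16_general
    {S A : Type*} [TopologicalSpace S] [PolishSpace S] [MeasurableSpace S] [BorelSpace S]
    [TopologicalSpace A] [PolishSpace A] [MeasurableSpace A] [BorelSpace A]
    {Ω : Type*} {m0 : MeasurableSpace Ω} (P : Measure Ω) [IsProbabilityMeasure P]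
    (ℱ : Filtration ℝ m0)
    (s : ℝ → Ω → S)
    (hs_adapted : ∀ t : ℝ, 0 ≤ t → Measurable[ℱ t] (s t))
    (hs_cadlag : ∀ ω : Ω,
      (∀ t : ℝ, 0 ≤ t → ContinuousWithinAt (fun r => s r ω) (Set.Ici t) t) ∧
      (∀ t : ℝ, 0 < t → ∃ l : S,
        Tendsto (fun r => s r ω) (nhdsWithin t (Set.Ioo 0 t)) (𝓝 l)))
    (υ : Measure S) (hlaw : P.map (s 0) = υ)
    (π : ℝ → Ω → Measure A) (hπprob : ∀ t ω, IsProbabilityMeasure (π t ω))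
    (hπ_prog : ∀ t : ℝ, 0 ≤ t → ∀ g : BoundedContinuousFunction A ℝ,
      @Measurable (Set.Icc (0:ℝ) t × Ω) ℝ
        (@Prod.instMeasurableSpace _ _ _ (ℱ t)) _
        (fun q => ∫ a, g a ∂(π (q.1 : ℝ) q.2)))
    (f : BoundedContinuousFunction S ℝ)
    (h : S × A × ℝ → ℝ) (hh_cont : Continuous h)
    (hh_int : ∀ t : ℝ, 0 ≤ t →
      (∫⁻ ω, (∫⁻ r in Set.Ioc (0:ℝ) t, ∫⁻ a, ENNReal.ofReal |h (s r ω, a, r)| ∂(π r ω)) ∂P) < ⊤)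
    (m : ℝ → Ω → ℝ)
    (hmdef : ∀ t ω, m t ω = f (s t ω) - f (s 0 ω)
        - ∫ r in Set.Ioc (0:ℝ) t, ∫ a, h (s r ω, a, r) ∂(π r ω))
    (hm_int : ∀ t : ℝ, 0 ≤ t → Integrable (m t) P)
    (hm_mart : ∀ t₁ t₂ : ℝ, 0 ≤ t₁ → t₁ ≤ t₂ → P[m t₂|ℱ t₁] =ᵐ[P] m t₁)
    (μ : ℝ → Measure (S × A)) (hμprob : ∀ t, IsProbabilityMeasure (μ t))
    (hμdef : ∀ t : ℝ, 0 ≤ t → ∀ g : BoundedContinuousFunction (S × A) ℝ,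
      ∫ x, g x ∂(μ t) = ∫ ω, (∫ a, g (s t ω, a) ∂(π t ω)) ∂P) :
    ∀ t : ℝ, 0 ≤ t →
      (∫ x, f x ∂((μ t).map Prod.fst)) - (∫ x, f x ∂υ)
        = ∫ r in Set.Ioc (0:ℝ) t, ∫ x : S × A, h (x.1, x.2, r) ∂(μ r) := by
  intro t ht
  have hs_meas (r : ℝ) (hr : 0 ≤ r) : Measurable (s r) := (hs_adapted r hr).mono (ℱ.le r) le_rfl
  have hf_int (r : ℝ) (hr : 0 ≤ r) : Integrable (fun ω => f (s r ω)) P :=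
    (f.integrable _).comp_measurable (hs_meas r hr)
  have hmean : ∫ ω, m t ω ∂P = 0 := by
    rw [← integral_condExp (ℱ.le 0), integral_congr_ae (hm_mart 0 t le_rfl ht)]
    simp [hmdef]
  have hdrift : ∫ ω, (∫ r in Set.Ioc (0:ℝ) t, ∫ a, h (s r ω, a, r) ∂π r ω) ∂P
      = ∫ ω, f (s t ω) ∂P - ∫ ω, f (s 0 ω) ∂P := by
    have hm (ω : Ω) : ∫ r in Set.Ioc (0:ℝ) t, ∫ a, h (s r ω, a, r) ∂π r ω
        = f (s t ω) - f (s 0 ω) - m t ω := by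
      rw [hmdef]; ring
    simp_rw [hm]
    rw [integral_sub _ (hm_int t ht), integral_sub (hf_int t ht) (hf_int 0 le_rfl), hmean,
      sub_zero]
    exact (hf_int t ht).sub (hf_int 0 le_rfl)
  rw [IsJointLaw.integral_map_fst (hμdef t ht) f, ← hlaw,
    integral_map (hs_meas 0 le_rfl).aemeasurable f.continuous.aestronglyMeasurable, ← hdrift]
  exact integral_setIntegral_Ioc_eq_of_isJointLaw hs_meas (fun ω => (hs_cadlag ω).1) ht
    (fun g => (hπ_prog t ht g).comp (measurable_fst.prodMk (measurable_snd.mono le_rfl (ℱ.le t))))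
    (fun r hr => hμdef r hr.1.le) hh_cont.measurable
    (by simpa only [Real.enorm_eq_ofReal_abs] using hh_int t ht)

/-- The time-marginal laws of a relaxed controlled martingale-problem solution
satisfy the Kolmogorov forward equation: if `m_t = f(s_t) − f(s_0) − ∫₀ᵗ ∫_A h(s_r,a,r) π_r(da) dr`
is a martingale and `μ_t` is the joint law of the state and the relaxed control, then
`∫ f dμ_t^S − ∫ f dυ = ∫₀ᵗ ∫_{S×A} h(s,a,r) μ_r(ds×da) dr` for all `t ≥ 0`. -/
theorem statement16
    {S A : Type*} [TopologicalSpace S] [PolishSpace S] [MeasurableSpace S] [BorelSpace S]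
    [TopologicalSpace A] [PolishSpace A] [MeasurableSpace A] [BorelSpace A]
    {Ω : Type*} {m0 : MeasurableSpace Ω} (P : Measure Ω) [IsProbabilityMeasure P]
    (ℱ : Filtration ℝ m0)
    (s : ℝ → Ω → S)
    (hs_adapted : ∀ t : ℝ, 0 ≤ t → Measurable[ℱ t] (s t))
    (hs_cadlag : ∀ ω : Ω,
      (∀ t : ℝ, 0 ≤ t → ContinuousWithinAt (fun r => s r ω) (Set.Ici t) t) ∧
      (∀ t : ℝ, 0 < t → ∃ l : S,
        Tendsto (fun r => s r ω) (nhdsWithin t (Set.Ioo 0 t)) (𝓝 l)))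
    (υ : Measure S) (hlaw : P.map (s 0) = υ)
    (π : ℝ → Ω → Measure A) (hπprob : ∀ t ω, IsProbabilityMeasure (π t ω))
    (hπ_adapted : ∀ t : ℝ, 0 ≤ t → ∀ g : BoundedContinuousFunction A ℝ,
      Measurable[ℱ t] fun ω => ∫ a, g a ∂(π t ω))
    (hπ_prog : ∀ t : ℝ, 0 ≤ t → ∀ g : BoundedContinuousFunction A ℝ,
      @Measurable (Set.Icc (0:ℝ) t × Ω) ℝ
        (@Prod.instMeasurableSpace _ _ _ (ℱ t)) _
        (fun q => ∫ a, g a ∂(π (q.1 : ℝ) q.2)))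
    (f : BoundedContinuousFunction S ℝ)
    (h : S × A × ℝ → ℝ) (hh_cont : Continuous h)
    (hh_int : ∀ t : ℝ, 0 ≤ t →
      (∫⁻ ω, (∫⁻ r in Set.Ioc (0:ℝ) t, ∫⁻ a, ENNReal.ofReal |h (s r ω, a, r)| ∂(π r ω)) ∂P) < ⊤)
    (m : ℝ → Ω → ℝ)
    (hmdef : ∀ t ω, m t ω = f (s t ω) - f (s 0 ω)
        - ∫ r in Set.Ioc (0:ℝ) t, ∫ a, h (s r ω, a, r) ∂(π r ω))
    (hm_int : ∀ t : ℝ, 0 ≤ t → Integrable (m t) P)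
    (hm_adapted : ∀ t : ℝ, 0 ≤ t → Measurable[ℱ t] (m t))
    (hm_mart : ∀ t₁ t₂ : ℝ, 0 ≤ t₁ → t₁ ≤ t₂ → P[m t₂|ℱ t₁] =ᵐ[P] m t₁)
    (μ : ℝ → Measure (S × A)) (hμprob : ∀ t, IsProbabilityMeasure (μ t))
    (hμdef : ∀ t : ℝ, 0 ≤ t → ∀ g : BoundedContinuousFunction (S × A) ℝ,
      ∫ x, g x ∂(μ t) = ∫ ω, (∫ a, g (s t ω, a) ∂(π t ω)) ∂P) :
    ∀ t : ℝ, 0 ≤ t →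
      (∫ x, f x ∂((μ t).map Prod.fst)) - (∫ x, f x ∂υ)
        = ∫ r in Set.Ioc (0:ℝ) t, ∫ x : S × A, h (x.1, x.2, r) ∂(μ r) :=
  statement16_general P ℱ s hs_adapted hs_cadlag υ hlaw π hπprob hπ_prog f h hh_cont hh_int m hmdef
    hm_int hm_mart μ hμprob hμdef
end

section
/- Let p ∈ [1,∞) and let (μ_n)_{n∈ℕ} and μ be Borel probability measures on ℝ, each with finite p-th moment, such that μ_n converges weakly to μ and ∫ |x|^p dμ_n(x) → ∫ |x|^p dμ(x). Then there exist a probability space (Ω̃, Σ̃, P̃) and real-valued random variables (X̃_n)_{n∈ℕ} and X̃ on it with law(X̃_n) = μ_n for all n and law(X̃) = μ, such that X̃_n → X̃ almost surely and E[ |X̃_n − X̃|^p ] → 0. -/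
/-!
Quantile coupling: every law `μ` on `ℝ` is the image of the uniform distribution on `(0, 1)` under
its quantile function. Weak convergence gives convergence of the cdfs at the non-atoms of the
limit, hence of the quantile functions at every continuity point of the (monotone) limit quantile,
that is, almost everywhere. Convergence of the `p`-th moments then upgrades almost sure convergence
to convergence in `L^p` by Pratt's lemma, dominating `|X n - X| ^ p` by
`2 ^ (p - 1) * (|X n| ^ p + |X| ^ p)`, whose integrals converge.
-/

open MeasureTheory Filter
open scoped Topology ENNReal

open Set ProbabilityTheory

theorem MonotoneOn.measurable_indicator {α β : Type*} [LinearOrder α] [TopologicalSpace α]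
    [OrderTopology α] [SecondCountableTopology α] [MeasurableSpace α] [BorelSpace α]
    [LinearOrder β] [TopologicalSpace β] [OrderClosedTopology β] [MeasurableSpace β] [BorelSpace β]
    [Zero α] {f : β → α} {s : Set β} (hf : MonotoneOn f s) (hs : MeasurableSet s) :
    Measurable (s.indicator f) := by
  refine measurable_of_restrict_of_restrict_compl hs ?_ ?_
  · have : Monotone (s.domRestrict (s.indicator f)) := fun x y hxy => by
      change s.indicator f x ≤ s.indicator f y
      simpa only [indicator_of_mem x.2, indicator_of_mem y.2] using hf x.2 y.2 hxy
    exact this.measurable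
  · have : sᶜ.domRestrict (s.indicator f) = fun _ => 0 :=
      funext fun x => indicator_of_notMem x.2 f
    exact this ▸ measurable_const

theorem Real.volume_Iic_inter_Ioo_zero_one {c : ℝ} (hc : c ≤ 1) :
    volume (Iic c ∩ Ioo 0 1) = ENNReal.ofReal c := by
  refine le_antisymm ?_ ?_
  · calc volume (Iic c ∩ Ioo 0 1) ≤ volume (Icc 0 c) :=
          measure_mono fun u hu => ⟨hu.2.1.le, hu.1⟩
      _ = ENNReal.ofReal c := by simp
  · calc ENNReal.ofReal c = volume (Ioo 0 c) := by simp
      _ ≤ volume (Iic c ∩ Ioo 0 1) :=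
          measure_mono fun u hu => ⟨hu.2.le, hu.1, hu.2.trans_le hc⟩

instance : IsProbabilityMeasure (volume.restrict (Ioo (0 : ℝ) 1)) :=
  ⟨by simp⟩

theorem ENNReal.ofReal_abs_rpow (x : ℝ) {p : ℝ} (hp : 0 ≤ p) :
    ENNReal.ofReal (|x| ^ p) = ‖x‖ₑ ^ p := by
  rw [Real.enorm_eq_ofReal_abs, ENNReal.ofReal_rpow_of_nonneg (abs_nonneg x) hp]

namespace MeasureTheory

variable {α : Type*} [MeasurableSpace α] {μ : Measure α}

theorem dense_setOf_measure_singleton_eq_zero (ν : Measure ℝ) [SFinite ν] :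
    Dense {x | ν {x} = 0} := by
  simpa [pos_iff_ne_zero, compl_ofPred] using
    (Measure.countable_meas_level_set_pos (μ := ν) measurable_id).dense_compl ℝ

/-- Pratt's generalized dominated convergence theorem, with limit `0`: Fatou's lemma applied to
`G n - F n` shows that no mass of `G n` can escape through `F n`. -/
theorem tendsto_lintegral_zero_of_le_of_tendsto_lintegral {F G : ℕ → α → ℝ≥0∞} {g : α → ℝ≥0∞}
    (hF : ∀ n, AEMeasurable (F n) μ) (hG : ∀ n, AEMeasurable (G n) μ) (hFG : ∀ n, F n ≤ G n)
    (hF_lim : ∀ᵐ a ∂μ, Tendsto (fun n => F n a) atTop (𝓝 0))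
    (hG_lim : ∀ᵐ a ∂μ, Tendsto (fun n => G n a) atTop (𝓝 (g a)))
    (hG_int : Tendsto (fun n => ∫⁻ a, G n a ∂μ) atTop (𝓝 (∫⁻ a, g a ∂μ)))
    (hg : ∫⁻ a, g a ∂μ ≠ ∞) :
    Tendsto (fun n => ∫⁻ a, F n a ∂μ) atTop (𝓝 0) := by
  set A : ℕ → ℝ≥0∞ := fun n => ∫⁻ a, (G n - F n) a ∂μ
  have hsplit : ∀ n, A n + ∫⁻ a, F n a ∂μ = ∫⁻ a, G n a ∂μ := fun n => by
    rw [← lintegral_add_right' _ (hF n)]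
    exact lintegral_congr fun a => tsub_add_cancel_of_le (hFG n a)
  have hA_le : ∀ n, A n ≤ ∫⁻ a, G n a ∂μ := fun n => (hsplit n) ▸ le_self_add
  have hfatou : ∫⁻ a, g a ∂μ ≤ liminf A atTop := by
    calc ∫⁻ a, g a ∂μ = ∫⁻ a, liminf (fun n => (G n - F n) a) atTop ∂μ := by
          refine lintegral_congr_ae ?_
          filter_upwards [hF_lim, hG_lim] with a hFa hGa
          simpa using (ENNReal.Tendsto.sub hGa hFa (Or.inr ENNReal.zero_ne_top)).liminf_eq.symm
      _ ≤ liminf A atTop := lintegral_liminf_le' fun n => (hG n).sub (hF n)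
  have hA : Tendsto A atTop (𝓝 (∫⁻ a, g a ∂μ)) :=
    tendsto_of_le_liminf_of_limsup_le hfatou
      ((limsup_le_limsup (Eventually.of_forall hA_le)).trans hG_int.limsup_eq.le)
  have hG_fin : ∀ᶠ n in atTop, ∫⁻ a, G n a ∂μ ≠ ∞ :=
    hG_int.eventually (eventually_lt_nhds hg.lt_top) |>.mono fun _ h => h.ne
  have hF_eq : ∀ᶠ n in atTop, ∫⁻ a, G n a ∂μ - A n = ∫⁻ a, F n a ∂μ :=
    hG_fin.mono fun n hn => by
      rw [← hsplit n, ENNReal.add_sub_cancel_left (ne_top_of_le_ne_top hn (hA_le n))]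
  simpa using (ENNReal.Tendsto.sub hG_int hA (Or.inl hg)).congr' hF_eq

theorem tendsto_lintegral_enorm_sub_rpow_of_tendsto_lintegral_enorm_rpow {E : Type*}
    [NormedAddCommGroup E] {p : ℝ} (hp : 1 ≤ p) {X : ℕ → α → E} {Y : α → E}
    (hX : ∀ n, AEStronglyMeasurable (X n) μ) (hY : AEStronglyMeasurable Y μ)
    (h_ae : ∀ᵐ a ∂μ, Tendsto (fun n => X n a) atTop (𝓝 (Y a)))
    (h_mom : Tendsto (fun n => ∫⁻ a, ‖X n a‖ₑ ^ p ∂μ) atTop (𝓝 (∫⁻ a, ‖Y a‖ₑ ^ p ∂μ)))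
    (hY_mom : ∫⁻ a, ‖Y a‖ₑ ^ p ∂μ ≠ ∞) :
    Tendsto (fun n => ∫⁻ a, ‖X n a - Y a‖ₑ ^ p ∂μ) atTop (𝓝 0) := by
  have hp0 : 0 < p := zero_lt_one.trans_le hp
  set c : ℝ≥0∞ := 2 ^ (p - 1)
  have hc : c ≠ ∞ := ENNReal.rpow_ne_top_of_nonneg (by linarith) ENNReal.ofNat_ne_top
  refine tendsto_lintegral_zero_of_le_of_tendsto_lintegral
    (G := fun n a => c * (‖X n a‖ₑ ^ p + ‖Y a‖ₑ ^ p))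
    (g := fun a => c * (‖Y a‖ₑ ^ p + ‖Y a‖ₑ ^ p))
    (fun n => ((hX n).sub hY).enorm.pow_const p)
    (fun n => ((hX n).enorm.pow_const p |>.add (hY.enorm.pow_const p)).const_mul c)
    (fun n a => ?_) ?_ ?_ ?_ ?_
  · calc ‖X n a - Y a‖ₑ ^ p ≤ (‖X n a‖ₑ + ‖Y a‖ₑ) ^ p := by gcongr; exact enorm_sub_le
      _ ≤ c * (‖X n a‖ₑ ^ p + ‖Y a‖ₑ ^ p) := ENNReal.rpow_add_le_mul_rpow_add_rpow _ _ hp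
  · filter_upwards [h_ae] with a ha
    have hdist : Tendsto (fun n => ‖X n a - Y a‖ₑ) atTop (𝓝 0) := by
      simpa using (tendsto_sub_nhds_zero_iff.mpr ha).enorm
    simpa [Function.comp_def, ENNReal.zero_rpow_of_pos hp0] using
      (ENNReal.continuous_rpow_const (y := p) |>.tendsto 0).comp hdist
  · filter_upwards [h_ae] with a ha
    exact ENNReal.Tendsto.const_mul
      (((ENNReal.continuous_rpow_const.tendsto _).comp ha.enorm).add tendsto_const_nhds) (Or.inr hc)
  · simp only [lintegral_const_mul' _ _ hc, lintegral_add_left' ((hX _).enorm.pow_const p),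
      lintegral_add_left' (hY.enorm.pow_const p)]
    exact ENNReal.Tendsto.const_mul (h_mom.add tendsto_const_nhds) (Or.inr hc)
  · rw [lintegral_const_mul' _ _ hc, lintegral_add_left' (hY.enorm.pow_const p)]
    exact ENNReal.mul_ne_top hc (ENNReal.add_ne_top.mpr ⟨hY_mom, hY_mom⟩)

theorem integral_abs_rpow_eq_toReal_lintegral {f : α → ℝ} (hf : AEStronglyMeasurable f μ) {p : ℝ}
    (hp : 0 ≤ p) :
    ∫ a, |f a| ^ p ∂μ = (∫⁻ a, ‖f a‖ₑ ^ p ∂μ).toReal := by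
  rw [integral_eq_lintegral_of_nonneg_ae (.of_forall fun _ => by positivity)
    (hf.aemeasurable.abs.pow_const p).aestronglyMeasurable]
  simp only [ENNReal.ofReal_abs_rpow _ hp]

end MeasureTheory

namespace ProbabilityTheory

/-- Outside `(0, 1)` the set is unbounded below or may be empty, and `sInf` returns the junk
value `0`; this is why the coupling uses `(Ioo 0 1).indicator (quantile μ)`. -/
noncomputable def quantile (μ : Measure ℝ) (u : ℝ) : ℝ := sInf {x | u ≤ cdf μ x}

variable {μ : Measure ℝ} {u x : ℝ}

lemma nonempty_setOf_le_cdf (hu : u < 1) : {x | u ≤ cdf μ x}.Nonempty :=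
  ((tendsto_cdf_atTop μ).eventually (eventually_ge_nhds hu)).exists

lemma bddBelow_setOf_le_cdf (hu : 0 < u) : BddBelow {x | u ≤ cdf μ x} := by
  obtain ⟨y, hy⟩ := ((tendsto_cdf_atBot μ).eventually (eventually_lt_nhds hu)).exists
  exact ⟨y, fun z hz => le_of_not_ge fun hzy => (hz.trans (monotone_cdf μ hzy)).not_gt hy⟩

/-- Right-continuity of `cdf μ` makes the infimum defining `quantile μ u` attained. -/
theorem quantile_le_iff (hu : u ∈ Ioo 0 1) : quantile μ u ≤ x ↔ u ≤ cdf μ x := by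
  refine ⟨fun h => ?_, fun h => csInf_le (bddBelow_setOf_le_cdf hu.1) h⟩
  have hgt : ∀ y ∈ Ioi x, u ≤ cdf μ y := fun y hy => by
    obtain ⟨z, hz, hzy⟩ := exists_lt_of_csInf_lt (nonempty_setOf_le_cdf hu.2) (h.trans_lt hy)
    exact hz.trans (monotone_cdf μ hzy.le)
  exact ge_of_tendsto
    ((cdf μ).right_continuous x |>.mono_left (nhdsWithin_mono x Ioi_subset_Ici_self))
    (eventually_nhdsWithin_of_forall hgt)

theorem le_cdf_quantile (hu : u ∈ Ioo 0 1) : u ≤ cdf μ (quantile μ u) :=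
  (quantile_le_iff hu).mp le_rfl

theorem monotoneOn_quantile : MonotoneOn (quantile μ) (Ioo 0 1) := fun _ hu _ hv huv =>
  (quantile_le_iff hu).mpr (huv.trans (le_cdf_quantile hv))

theorem measurable_indicator_quantile : Measurable ((Ioo 0 1).indicator (quantile μ)) :=
  monotoneOn_quantile.measurable_indicator measurableSet_Ioo

theorem map_indicator_quantile [IsProbabilityMeasure μ] :
    (volume.restrict (Ioo 0 1)).map ((Ioo 0 1).indicator (quantile μ)) = μ := by
  refine Measure.ext_of_Iic _ _ fun a => ?_
  have hpre :
      (Ioo 0 1).indicator (quantile μ) ⁻¹' Iic a ∩ Ioo 0 1 = Iic (cdf μ a) ∩ Ioo 0 1 := by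
    ext u
    simp only [mem_inter_iff, mem_preimage, mem_Iic]
    exact and_congr_left fun hu => by rw [indicator_of_mem hu, quantile_le_iff hu]
  rw [Measure.map_apply measurable_indicator_quantile measurableSet_Iic,
    Measure.restrict_apply (measurable_indicator_quantile measurableSet_Iic), hpre,
    Real.volume_Iic_inter_Ioo_zero_one (cdf_le_one μ a), ofReal_cdf]

theorem lintegral_comp_indicator_quantile [IsProbabilityMeasure μ] {f : ℝ → ℝ≥0∞}
    (hf : Measurable f) :
    ∫⁻ u in Ioo 0 1, f ((Ioo 0 1).indicator (quantile μ) u) = ∫⁻ x, f x ∂μ := by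
  rw [← lintegral_map hf measurable_indicator_quantile, map_indicator_quantile]

theorem tendsto_cdf_of_tendsto {ι : Type*} {L : Filter ι} {μs : ι → ProbabilityMeasure ℝ}
    {ν : ProbabilityMeasure ℝ} (h : Tendsto μs L (𝓝 ν)) {x : ℝ} (hx : (ν : Measure ℝ) {x} = 0) :
    Tendsto (fun i => cdf (μs i) x) L (𝓝 (cdf ν x)) := by
  have hfrontier : ν (frontier (Iic x)) = 0 := by
    simp [ProbabilityMeasure.coeFn_def, hx]
  simpa only [cdf_eq_real, ProbabilityMeasure.coeFn_def, ENNReal.coe_toNNReal_eq_toReal,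
    measureReal_def] using
    NNReal.tendsto_coe.mpr
      (ProbabilityMeasure.tendsto_measure_of_null_frontier_of_tendsto h hfrontier)

/-- Compare `quantile` with `cdf` at nearby non-atoms of the limit, where the cdfs converge. -/
theorem tendsto_quantile_of_tendsto {ι : Type*} {L : Filter ι} {μs : ι → ProbabilityMeasure ℝ}
    {ν : ProbabilityMeasure ℝ} (h : Tendsto μs L (𝓝 ν)) (hu : u ∈ Ioo 0 1)
    (hcont : ContinuousAt (quantile ν) u) :
    Tendsto (fun i => quantile (μs i) u) L (𝓝 (quantile ν u)) := by
  have hdense := dense_setOf_measure_singleton_eq_zero (ν : Measure ℝ)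
  refine tendsto_order.2 ⟨fun a ha => ?_, fun b hb => ?_⟩
  · obtain ⟨x, hx0, hax, hxq⟩ := hdense.exists_between ha
    have hcdf : cdf ν x < u := lt_of_not_ge fun h' => hxq.not_ge ((quantile_le_iff hu).mpr h')
    filter_upwards [(tendsto_cdf_of_tendsto h hx0).eventually (eventually_lt_nhds hcdf)] with i hi
    exact hax.trans (lt_of_not_ge fun h' => hi.not_ge ((quantile_le_iff hu).mp h'))
  · obtain ⟨v, hv, hqv⟩ : ∃ v ∈ Ioo u 1, quantile ν v < b := by
      have hright : ∀ᶠ v in 𝓝[>] u, quantile ν v < b :=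
        (hcont.eventually (eventually_lt_nhds hb)).filter_mono nhdsWithin_le_nhds
      obtain ⟨v, hvb, hv⟩ := (hright.and (Ioo_mem_nhdsGT hu.2)).exists
      exact ⟨v, hv, hvb⟩
    obtain ⟨x, hx0, hqx, hxb⟩ := hdense.exists_between hqv
    have hcdf : u < cdf ν x := hv.1.trans_le <|
      (le_cdf_quantile ⟨hu.1.trans hv.1, hv.2⟩).trans (monotone_cdf _ hqx.le)
    filter_upwards [(tendsto_cdf_of_tendsto h hx0).eventually (eventually_gt_nhds hcdf)] with i hi
    exact ((quantile_le_iff hu).mpr hi.le).trans_lt hxb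

theorem ae_tendsto_indicator_quantile {ι : Type*} {L : Filter ι} {μs : ι → ProbabilityMeasure ℝ}
    {ν : ProbabilityMeasure ℝ} (h : Tendsto μs L (𝓝 ν)) :
    ∀ᵐ u ∂volume.restrict (Ioo 0 1), Tendsto (fun i => (Ioo 0 1).indicator (quantile (μs i)) u)
      L (𝓝 ((Ioo 0 1).indicator (quantile ν) u)) := by
  have hjumps := (monotoneOn_quantile (μ := ν)).countable_not_continuousWithinAt
  rw [ae_restrict_iff' measurableSet_Ioo]
  filter_upwards [measure_eq_zero_iff_ae_notMem.mp (hjumps.measure_zero volume)] with u hu hu01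
  have hcont : ContinuousAt (quantile ν) u := by
    by_contra hdisc
    exact hu ⟨hu01, fun hwithin => hdisc (hwithin.continuousAt (Ioo_mem_nhds hu01.1 hu01.2))⟩
  simpa only [indicator_of_mem hu01] using tendsto_quantile_of_tendsto h hu01 hcont

end ProbabilityTheory

theorem statement17_general (p : ℝ) (hp : 1 ≤ p)
    (μ : ℕ → Measure ℝ) (ν : Measure ℝ)
    (hμprob : ∀ n, IsProbabilityMeasure (μ n)) (hνprob : IsProbabilityMeasure ν)
    (hνmom : (∫⁻ x, ENNReal.ofReal (|x| ^ p) ∂ν) < ⊤)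
    (hweak : ∀ f : BoundedContinuousFunction ℝ ℝ,
      Tendsto (fun n => ∫ x, f x ∂(μ n)) atTop (𝓝 (∫ x, f x ∂ν)))
    (hmom : Tendsto (fun n => ∫⁻ x, ENNReal.ofReal (|x| ^ p) ∂(μ n)) atTop
      (𝓝 (∫⁻ x, ENNReal.ofReal (|x| ^ p) ∂ν))) :
    ∃ (Ω : Type) (mΩ : MeasurableSpace Ω) (P : Measure Ω), IsProbabilityMeasure P ∧
      ∃ (X : ℕ → Ω → ℝ) (X' : Ω → ℝ),
        (∀ n, Measurable (X n)) ∧ Measurable X' ∧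
        (∀ n, P.map (X n) = μ n) ∧ P.map X' = ν ∧
        (∀ᵐ ω ∂P, Tendsto (fun n => X n ω) atTop (𝓝 (X' ω))) ∧
        Tendsto (fun n => ∫ ω, |X n ω - X' ω| ^ p ∂P) atTop (𝓝 0) := by
  have hp0 : 0 ≤ p := zero_le_one.trans hp
  let μs : ℕ → ProbabilityMeasure ℝ := fun n => ⟨μ n, hμprob n⟩
  let ν' : ProbabilityMeasure ℝ := ⟨ν, hνprob⟩
  have hconv : Tendsto μs atTop (𝓝 ν') :=
    ProbabilityMeasure.tendsto_iff_forall_integral_tendsto.mpr hweak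
  set P := volume.restrict (Ioo (0 : ℝ) 1)
  set X := fun n => (Ioo 0 1).indicator (quantile (μ n))
  set X' := (Ioo 0 1).indicator (quantile ν)
  have hae : ∀ᵐ u ∂P, Tendsto (fun n => X n u) atTop (𝓝 (X' u)) :=
    ae_tendsto_indicator_quantile (μs := μs) (ν := ν') hconv
  have hmoment (ρ : Measure ℝ) (hρ : IsProbabilityMeasure ρ) :
      ∫⁻ x, ENNReal.ofReal (|x| ^ p) ∂ρ =
        ∫⁻ u in Ioo 0 1, ‖(Ioo 0 1).indicator (quantile ρ) u‖ₑ ^ p := by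
    simp only [ENNReal.ofReal_abs_rpow _ hp0]
    exact (lintegral_comp_indicator_quantile (by fun_prop)).symm
  have hLp : Tendsto (fun n => ∫⁻ u, ‖X n u - X' u‖ₑ ^ p ∂P) atTop (𝓝 0) :=
    tendsto_lintegral_enorm_sub_rpow_of_tendsto_lintegral_enorm_rpow hp
      (fun _ => measurable_indicator_quantile.aestronglyMeasurable)
      measurable_indicator_quantile.aestronglyMeasurable hae
      (by simpa only [hmoment, hμprob, hνprob] using hmom)
      (by simpa only [hmoment, hνprob] using hνmom.ne)
  refine ⟨ℝ, inferInstance, P, inferInstance, X, X', fun _ => measurable_indicator_quantile,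
    measurable_indicator_quantile, fun _ => map_indicator_quantile, map_indicator_quantile, hae, ?_⟩
  have hint (n : ℕ) :=
    integral_abs_rpow_eq_toReal_lintegral (μ := P) (f := fun u => X n u - X' u)
      (measurable_indicator_quantile.sub measurable_indicator_quantile).aestronglyMeasurable hp0
  simpa only [hint, Function.comp_def, ENNReal.toReal_zero] using
    (ENNReal.tendsto_toReal ENNReal.zero_ne_top).comp hLp

/-- Skorokhod representation with convergence of `p`-th moments: if Borel
probability measures `μ_n` on `ℝ` with finite `p`-th moments converge weakly to `μ` and their
`p`-th absolute moments converge to that of `μ`, then there are random variables `X̃_n`, `X̃` on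
a common probability space with `law(X̃_n) = μ_n`, `law(X̃) = μ`, `X̃_n → X̃` a.s., and
`E[|X̃_n − X̃|^p] → 0`. -/
theorem statement17 (p : ℝ) (hp : 1 ≤ p)
    (μ : ℕ → Measure ℝ) (ν : Measure ℝ)
    (hμprob : ∀ n, IsProbabilityMeasure (μ n)) (hνprob : IsProbabilityMeasure ν)
    (hμmom : ∀ n, (∫⁻ x, ENNReal.ofReal (|x| ^ p) ∂(μ n)) < ⊤)
    (hνmom : (∫⁻ x, ENNReal.ofReal (|x| ^ p) ∂ν) < ⊤)
    (hweak : ∀ f : BoundedContinuousFunction ℝ ℝ,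
      Tendsto (fun n => ∫ x, f x ∂(μ n)) atTop (𝓝 (∫ x, f x ∂ν)))
    (hmom : Tendsto (fun n => ∫⁻ x, ENNReal.ofReal (|x| ^ p) ∂(μ n)) atTop
      (𝓝 (∫⁻ x, ENNReal.ofReal (|x| ^ p) ∂ν))) :
    ∃ (Ω : Type) (mΩ : MeasurableSpace Ω) (P : Measure Ω), IsProbabilityMeasure P ∧
      ∃ (X : ℕ → Ω → ℝ) (X' : Ω → ℝ),
        (∀ n, Measurable (X n)) ∧ Measurable X' ∧
        (∀ n, P.map (X n) = μ n) ∧ P.map X' = ν ∧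
        (∀ᵐ ω ∂P, Tendsto (fun n => X n ω) atTop (𝓝 (X' ω))) ∧
        Tendsto (fun n => ∫ ω, |X n ω - X' ω| ^ p ∂P) atTop (𝓝 0) :=
  statement17_general p hp μ ν hμprob hνprob hνmom hweak hmom
end
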